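/- arXiv:1708.04428 — 4 statements merged into one kernel-verified Lean document; each statement's English description precedes it below -/
import Mathlib

section
/- Let $\preceq$ be a convex preorder on $X \subset V \setminus \{0\}$ such that $\operatorname{span}_{\ge 0}X \cap (-\operatorname{span}_{\ge 0}X) = \{0\}$. Let $\mathcal C$ be a $\preceq$-equivalence class with $\mathcal C_- = \{x \in X : x \prec \mathcal C\}$. Suppose $\beta$ lies in $\operatorname{span}_{\ge 0}\mathcal C'$ for some $\preceq$-equivalence class $\mathcal C'$, and $\beta = \beta_1 + \beta_2$ with $\beta_1 \in \operatorname{span}_{\ge 0}(\mathcal C_- \cup \mathcal C)$ and $\beta_2 \in \operatorname{span}_{\ge 0}\mathcal C_-$, $\beta_2 \ne 0$. Then $\beta \in \operatorname{span}_{\ge 0}\mathcal C_-$. -/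
open scoped BigOperators

/-- `nnspan S` is the set of finite linear combinations of elements of `S`
with non-negative real coefficients (by convention `nnspan ∅ = {0}`). -/
def nnspan {V : Type*} [AddCommGroup V] [Module ℝ V] (S : Set V) : Set V :=
  {x | ∃ (n : ℕ) (c : Fin n → ℝ) (v : Fin n → V),
    (∀ i, 0 ≤ c i) ∧ (∀ i, v i ∈ S) ∧ x = ∑ i, c i • v i}

/-- Minkowski sum of two subsets of `V`. -/
def setAdd {V : Type*} [AddCommGroup V] [Module ℝ V] (A B : Set V) : Set V :=
  {z | ∃ a ∈ A, ∃ b ∈ B, z = a + b}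

/-- Elements of `X` strictly below `x` for the preorder `le`. -/
def strictBelow {V : Type*} [AddCommGroup V] [Module ℝ V]
    (le : V → V → Prop) (x : V) (X : Set V) : Set V :=
  {y ∈ X | le y x ∧ ¬ le x y}

/-- Elements of `X` strictly above `x` for the preorder `le`. -/
def strictAbove {V : Type*} [AddCommGroup V] [Module ℝ V]
    (le : V → V → Prop) (x : V) (X : Set V) : Set V :=
  {y ∈ X | le x y ∧ ¬ le y x}

/-- The `le`-equivalence class of `x` inside `X`. -/
def eqClass {V : Type*} [AddCommGroup V] [Module ℝ V]
    (le : V → V → Prop) (x : V) (X : Set V) : Set V :=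
  {y ∈ X | le x y ∧ le y x}

/-- A convex preorder on `X ⊆ V \ {0}`: a total preorder on `X` such that for every
equivalence class `𝒞`, the triple (strictly below `𝒞`, `𝒞`, strictly above `𝒞`) is a
face, i.e. for any non-negative combinations `x₋` (of the strictly-below set) and `x₊`
(of the strictly-above set) with `x₋ - x₊ ∈ span ℝ 𝒞`, one has `x₋ = x₊ = 0`. -/
def IsConvexPreorder {V : Type*} [AddCommGroup V] [Module ℝ V]
    (X : Set V) (le : V → V → Prop) : Prop :=
  (∀ x ∈ X, le x x) ∧
  (∀ x ∈ X, ∀ y ∈ X, ∀ z ∈ X, le x y → le y z → le x z) ∧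
  (∀ x ∈ X, ∀ y ∈ X, le x y ∨ le y x) ∧
  (∀ x ∈ X, ∀ xm ∈ nnspan (strictBelow le x X), ∀ xp ∈ nnspan (strictAbove le x X),
    xm - xp ∈ Submodule.span ℝ (eqClass le x X) → xm = 0 ∧ xp = 0)

lemma nnspan_mono' {V : Type*} [AddCommGroup V] [Module ℝ V] {S T : Set V}
    (h : S ⊆ T) : nnspan S ⊆ nnspan T := by
  rintro x ⟨n, c, v, hc, hv, rfl⟩
  exact ⟨n, c, v, hc, fun i => h (hv i), rfl⟩

lemma zero_mem_nnspan' {V : Type*} [AddCommGroup V] [Module ℝ V] (S : Set V) :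
    (0 : V) ∈ nnspan S :=
  ⟨0, fun i => 0, fun i => 0, fun i => le_refl 0, fun i => i.elim0, by simp⟩

lemma add_mem_nnspan' {V : Type*} [AddCommGroup V] [Module ℝ V] {S : Set V} {a b : V}
    (ha : a ∈ nnspan S) (hb : b ∈ nnspan S) : a + b ∈ nnspan S := by
  obtain ⟨n, cn, vn, hcn, hvn, rfl⟩ := ha
  obtain ⟨m, cm, vm, hcm, hvm, rfl⟩ := hb
  refine ⟨n + m, Fin.append cn cm, Fin.append vn vm, ?_, ?_, ?_⟩
  · intro i
    refine Fin.addCases (fun j => ?_) (fun j => ?_) i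
    · simpa [Fin.append_left] using hcn j
    · simpa [Fin.append_right] using hcm j
  · intro i
    refine Fin.addCases (fun j => ?_) (fun j => ?_) i
    · simpa [Fin.append_left] using hvn j
    · simpa [Fin.append_right] using hvm j
  · rw [Fin.sum_univ_add]
    simp [Fin.append_left, Fin.append_right]

lemma smul_mem_nnspan' {V : Type*} [AddCommGroup V] [Module ℝ V] {S : Set V} {r : ℝ} {s : V}
    (hr : 0 ≤ r) (hs : s ∈ S) : r • s ∈ nnspan S :=
  ⟨1, fun _ => r, fun _ => s, fun _ => hr, fun _ => hs, by simp⟩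

lemma nnspan_subset_span' {V : Type*} [AddCommGroup V] [Module ℝ V] (S : Set V) :
    nnspan S ⊆ (Submodule.span ℝ S : Submodule ℝ V) := by
  rintro x ⟨n, c, v, hc, hv, rfl⟩
  exact Submodule.sum_mem _ fun i _ =>
    Submodule.smul_mem _ _ (Submodule.subset_span (hv i))

lemma nnspan_union_aux' {V : Type*} [AddCommGroup V] [Module ℝ V] (A B : Set V) :
    ∀ (n : ℕ) (c : Fin n → ℝ) (v : Fin n → V),
    (∀ i, 0 ≤ c i) → (∀ i, v i ∈ A ∪ B) →
    ∃ a ∈ nnspan A, ∃ b ∈ nnspan B, ∑ i, c i • v i = a + b := by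
  intro n
  induction n with
  | zero =>
    intro c v _ _
    exact ⟨0, zero_mem_nnspan' A, 0, zero_mem_nnspan' B, by simp⟩
  | succ n ih =>
    intro c v hc hv
    obtain ⟨a, ha, b, hb, hab⟩ := ih (fun i => c i.succ) (fun i => v i.succ)
      (fun i => hc _) (fun i => hv _)
    rw [Fin.sum_univ_succ, hab]
    rcases hv 0 with hA | hB
    · exact ⟨c 0 • v 0 + a, add_mem_nnspan' (smul_mem_nnspan' (hc 0) hA) ha, b, hb,
        by abel⟩
    · exact ⟨a, ha, c 0 • v 0 + b, add_mem_nnspan' (smul_mem_nnspan' (hc 0) hB) hb,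
        by abel⟩

lemma nnspan_union' {V : Type*} [AddCommGroup V] [Module ℝ V] {A B : Set V} {x : V}
    (hx : x ∈ nnspan (A ∪ B)) :
    ∃ a ∈ nnspan A, ∃ b ∈ nnspan B, x = a + b := by
  obtain ⟨n, c, v, hc, hv, rfl⟩ := hx
  exact nnspan_union_aux' A B n c v hc hv

/-- Let `⪯` be a convex preorder on `X ⊆ V \ {0}` with
`nnspan X ∩ (-nnspan X) = {0}`. Let `𝒞` be the equivalence class of `c ∈ X` and
`𝒞₋` the set of elements of `X` strictly below `𝒞`. If `β ∈ nnspan 𝒞'` for the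
equivalence class `𝒞'` of some `c' ∈ X`, and `β = β₁ + β₂` with
`β₁ ∈ nnspan (𝒞₋ ∪ 𝒞)`, `β₂ ∈ nnspan 𝒞₋` and `β₂ ≠ 0`, then `β ∈ nnspan 𝒞₋`. -/
theorem convexPreorder_mem_nnspan_below {V : Type*} [AddCommGroup V] [Module ℝ V]
    (X : Set V) (hX0 : (0 : V) ∉ X) (le : V → V → Prop)
    (hconv : IsConvexPreorder X le)
    (hsal : nnspan X ∩ (-nnspan X) = {0})
    (c : V) (hc : c ∈ X)
    (c' : V) (hc' : c' ∈ X)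
    (β β₁ β₂ : V)
    (hβ : β ∈ nnspan (eqClass le c' X))
    (hsum : β = β₁ + β₂)
    (h₁ : β₁ ∈ nnspan (strictBelow le c X ∪ eqClass le c X))
    (h₂ : β₂ ∈ nnspan (strictBelow le c X))
    (h₂0 : β₂ ≠ 0) :
    β ∈ nnspan (strictBelow le c X) := by
  obtain ⟨hrefl, htrans, htot, hface⟩ := hconv
  -- β₂ is nonzero, hence cannot be in nnspan X ∩ (-nnspan X)
  have hβ₂X : β₂ ∈ nnspan X := nnspan_mono' (fun y hy => hy.1) h₂
  have key : ∀ γm : V, γm ∈ nnspan (strictBelow le c X) → γm + β₂ ≠ 0 := by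
    intro γm hγm h0
    have hneg : β₂ ∈ -nnspan X := by
      rw [Set.mem_neg]
      rw [neg_eq_of_add_eq_zero_left h0]
      exact nnspan_mono' (fun y hy => hy.1) hγm
    have : β₂ ∈ nnspan X ∩ (-nnspan X) := ⟨hβ₂X, hneg⟩
    rw [hsal] at this
    exact h₂0 this
  by_cases hcc' : le c' c
  · by_cases hc'c : le c c'
    · -- c ~ c' : equivalence classes agree, contradiction via face condition
      exfalso
      have hsub : eqClass le c' X ⊆ eqClass le c X := by
        rintro y ⟨hyX, hc'y, hyc'⟩
        exact ⟨hyX, htrans c hc c' hc' y hyX hc'c hc'y, htrans y hyX c' hc' c hc hyc' hcc'⟩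
      have hβC : β ∈ nnspan (eqClass le c X) := nnspan_mono' hsub hβ
      obtain ⟨γm, hγm, γ0, hγ0, h1eq⟩ := nnspan_union' h₁
      have hmem : (γm + β₂) - 0 ∈ Submodule.span ℝ (eqClass le c X) := by
        have heq : (γm + β₂) - 0 = β - γ0 := by rw [hsum, h1eq]; abel
        rw [heq]
        exact sub_mem (nnspan_subset_span' _ hβC) (nnspan_subset_span' _ hγ0)
      have := (hface c hc (γm + β₂) (add_mem_nnspan' hγm h₂) 0
        (zero_mem_nnspan' _) hmem).1
      exact key γm hγm this
    · -- c' strictly below c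
      have hsub : eqClass le c' X ⊆ strictBelow le c X := by
        rintro y ⟨hyX, hc'y, hyc'⟩
        refine ⟨hyX, htrans y hyX c' hc' c hc hyc' hcc', fun h => hc'c ?_⟩
        exact htrans c hc y hyX c' hc' h hyc'
      exact nnspan_mono' hsub hβ
  · -- c strictly below c'
    exfalso
    have hc'c : le c c' := (htot c hc c' hc').resolve_right hcc'
    have hsub : eqClass le c' X ⊆ strictAbove le c X := by
      rintro y ⟨hyX, hc'y, hyc'⟩
      refine ⟨hyX, htrans c hc c' hc' y hyX hc'c hc'y, fun h => hcc' ?_⟩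
      exact htrans c' hc' y hyX c hc hc'y h
    have hβP : β ∈ nnspan (strictAbove le c X) := nnspan_mono' hsub hβ
    obtain ⟨γm, hγm, γ0, hγ0, h1eq⟩ := nnspan_union' h₁
    have hmem : (γm + β₂) - β ∈ Submodule.span ℝ (eqClass le c X) := by
      have heq : (γm + β₂) - β = -γ0 := by rw [hsum, h1eq]; abel
      rw [heq]
      exact neg_mem (nnspan_subset_span' _ hγ0)
    have := (hface c hc (γm + β₂) (add_mem_nnspan' hγm h₂) β hβP hmem).1
    exact key γm hγm this
end

section
/- Let $n, m$ be integers with $1 < m \le n$ and $V = \mathbb R^n$. Let $H = \bigcup_{k=1}^m \{x \in V : x_j = 0 \text{ for } 1 \le j < k \text{ and } x_k > 0\}$, $H_+ = \{x \in H : x_1 > 0\}$, $H_0 = \{x \in H : x_1 = 0\}$. Define the total preorder $\preceq$ on $H$ by: all of $H_0$ is one equivalence class with $H_+ \prec H_0$, and for $x, y \in H_+$, $x \prec y$ iff there exists $2 \le k \le m$ with $x_j/x_1 = y_j/y_1$ for $2 \le j < k$ and $x_k/x_1 < y_k/y_1$. Then $\preceq$ is a convex preorder on $H$, and moreover $\dim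 \operatorname{span}_{\mathbb R}\mathcal C < n$ for every $\preceq$-equivalence class $\mathcal C$. -/
open scoped BigOperators

/-- The set `H ⊆ ℝⁿ` : union over `k = 1, …, m` (here 0-indexed: `k < m`) of the sets
`{x : x_j = 0 for j < k and x_k > 0}`. -/
def Hset (n m : ℕ) : Set (Fin n → ℝ) :=
  {x | ∃ k : Fin n, (k : ℕ) < m ∧ (∀ j : Fin n, j < k → x j = 0) ∧ 0 < x k}

/-- The total preorder on `Hset n m` from the paper: `H₀` (first coordinate zero) is a
single equivalence class, `H₊ ≺ H₀`, and on `H₊` a lexicographic comparison of the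
ratios `x_j / x_1` for `2 ≤ j ≤ m` (0-indexed: `1 ≤ j < m`). -/
def leH (n m : ℕ) (hn : 0 < n) (x y : Fin n → ℝ) : Prop :=
  (x ⟨0, hn⟩ = 0 ∧ y ⟨0, hn⟩ = 0) ∨
  (0 < x ⟨0, hn⟩ ∧ y ⟨0, hn⟩ = 0) ∨
  (0 < x ⟨0, hn⟩ ∧ 0 < y ⟨0, hn⟩ ∧
    ((∀ j : Fin n, 0 < (j : ℕ) → (j : ℕ) < m → x j / x ⟨0, hn⟩ = y j / y ⟨0, hn⟩) ∨
     (∃ k : Fin n, 0 < (k : ℕ) ∧ (k : ℕ) < m ∧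
        (∀ j : Fin n, 0 < (j : ℕ) → j < k → x j / x ⟨0, hn⟩ = y j / y ⟨0, hn⟩) ∧
        x k / x ⟨0, hn⟩ < y k / y ⟨0, hn⟩)))

/-!
On `H` the preorder `leH` is the pullback of a linear order along the key that sends `H₀` to `⊤`
and `x ∈ H₊` to its vector of ratios `x_j / x_0` (`0 < j < m`), ordered lexicographically; so it
is a total preorder. A class is a face as soon as some linear map into an ordered vector space is
negative strictly below it, zero on it and positive strictly above it, since non-negative
combinations of such vectors cannot cancel. For `H₀` the map `y ↦ -y_0` does this. For the class
of `x ∈ H₊` take `y ↦ (y_j - (x_j / x_0) y_0)_{0<j<m}` into lexicographically ordered `ℝⁿ`: on `H₊`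
it is `y_0` times the difference of the ratio vectors of `y` and `x`, and on `H₀` its first nonzero
entry is the first nonzero coordinate of `y`, which is positive. Either map is nonzero and vanishes
on the class, so the class spans a proper subspace.
-/

instance Pi.Lex.posSMulStrictMono {ι α β : Type*} [LinearOrder ι] [Zero α] [Preorder α]
    [PartialOrder β] [SMul α β] [PosSMulStrictMono α β] : PosSMulStrictMono α (Lex (ι → β)) where
  smul_lt_smul_of_pos_left _ ha _ _ := by
    rintro ⟨i, hj, hi⟩
    exact ⟨i, fun j hji => congrArg _ (hj j hji), smul_lt_smul_of_pos_left hi ha⟩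

section Face

variable {V W : Type*} [AddCommGroup V] [Module ℝ V]

def IsFace (L C U : Set V) : Prop :=
  ∀ xm ∈ nnspan L, ∀ xp ∈ nnspan U, xm - xp ∈ Submodule.span ℝ C → xm = 0 ∧ xp = 0

structure Separates [Zero W] [LT W] (f : V → W) (L C U : Set V) : Prop where
  lt_zero : ∀ u ∈ L, f u < 0
  eq_zero : ∀ y ∈ C, f y = 0
  pos : ∀ w ∈ U, 0 < f w

variable [AddCommGroup W] [PartialOrder W] [IsOrderedAddMonoid W] [Module ℝ W] {S : Set V} {x : V}

lemma map_nonneg_of_mem_nnspan [PosSMulMono ℝ W] (f : V →ₗ[ℝ] W) (hf : ∀ s ∈ S, 0 ≤ f s)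
    (hx : x ∈ nnspan S) : 0 ≤ f x := by
  obtain ⟨N, c, v, hc, hv, rfl⟩ := hx
  simp only [map_sum, map_smul]
  exact Finset.sum_nonneg fun i _ => smul_nonneg (hc i) (hf _ (hv i))

lemma eq_zero_of_mem_nnspan_of_map_nonpos [PosSMulStrictMono ℝ W] (f : V →ₗ[ℝ] W)
    (hf : ∀ s ∈ S, 0 < f s) (hx : x ∈ nnspan S) (hfx : f x ≤ 0) : x = 0 := by
  obtain ⟨N, c, v, hc, hv, rfl⟩ := hx
  have hterm : ∀ i, 0 ≤ c i • f (v i) := fun i => smul_nonneg (hc i) (hf _ (hv i)).le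
  simp only [map_sum, map_smul] at hfx
  have hzero := (Finset.sum_eq_zero_iff_of_nonneg fun i _ => hterm i).1
    (hfx.antisymm (Finset.sum_nonneg fun i _ => hterm i))
  refine Finset.sum_eq_zero fun i hi => ?_
  obtain hci | hci := (hc i).eq_or_lt
  · rw [← hci, zero_smul]
  · exact absurd (hzero i hi) (smul_pos hci (hf _ (hv i))).ne'

lemma Separates.isFace [PosSMulStrictMono ℝ W] {f : V →ₗ[ℝ] W} {L C U : Set V}
    (hf : Separates f L C U) : IsFace L C U := by
  obtain ⟨hneg, hzero, hpos⟩ := hf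
  intro xm hxm xp hxp hspan
  have hC : Submodule.span ℝ C ≤ LinearMap.ker f := Submodule.span_le.2 hzero
  have heq : f xm = f xp := sub_eq_zero.1 (by rw [← map_sub]; exact hC hspan)
  have hxm_nonpos : f xm ≤ 0 := neg_nonneg.1 <|
    map_nonneg_of_mem_nnspan (-f) (fun u hu => neg_nonneg.2 (hneg u hu).le) hxm
  have hxp : xp = 0 := eq_zero_of_mem_nnspan_of_map_nonpos f hpos hxp (heq ▸ hxm_nonpos)
  refine ⟨eq_zero_of_mem_nnspan_of_map_nonpos (-f) (fun u hu => neg_pos.2 (hneg u hu)) hxm ?_,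
    hxp⟩
  rw [LinearMap.neg_apply, heq, hxp, map_zero, neg_zero]

end Face

lemma finrank_span_lt_of_forall_map_eq_zero {K V W : Type*} [Field K] [AddCommGroup V]
    [Module K V] [FiniteDimensional K V] [AddCommGroup W] [Module K W] {C : Set V}
    (f : V →ₗ[K] W) (hf0 : f ≠ 0) (hC : ∀ y ∈ C, f y = 0) :
    Module.finrank K (Submodule.span K C) < Module.finrank K V := by
  refine Submodule.finrank_lt (fun htop => hf0 (LinearMap.ker_eq_top.1 (top_le_iff.1 ?_)))
  exact htop ▸ Submodule.span_le.2 hC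

section Key

variable {V α : Type*} [AddCommGroup V] [Module ℝ V] [LinearOrder α] {X : Set V}
  {le : V → V → Prop} {key : V → α}

lemma strictBelow_eq_of_key (hkey : ∀ x ∈ X, ∀ y ∈ X, le x y ↔ key x ≤ key y) {x : V}
    (hx : x ∈ X) : strictBelow le x X = {u ∈ X | key u < key x} := by
  ext u
  simp only [strictBelow, Set.mem_ofPred_eq, lt_iff_le_not_ge]
  exact and_congr_right fun hu => by rw [hkey u hu x hx, hkey x hx u hu]

lemma strictAbove_eq_of_key (hkey : ∀ x ∈ X, ∀ y ∈ X, le x y ↔ key x ≤ key y) {x : V}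
    (hx : x ∈ X) : strictAbove le x X = {w ∈ X | key x < key w} := by
  ext w
  simp only [strictAbove, Set.mem_ofPred_eq, lt_iff_le_not_ge]
  exact and_congr_right fun hw => by rw [hkey w hw x hx, hkey x hx w hw]

lemma eqClass_eq_of_key (hkey : ∀ x ∈ X, ∀ y ∈ X, le x y ↔ key x ≤ key y) {x : V}
    (hx : x ∈ X) : eqClass le x X = {y ∈ X | key y = key x} := by
  ext y
  simp only [eqClass, Set.mem_ofPred_eq, le_antisymm_iff (a := key y)]
  exact and_congr_right fun hy => by rw [hkey y hy x hx, hkey x hx y hy, and_comm]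

lemma isConvexPreorder_of_key (hkey : ∀ x ∈ X, ∀ y ∈ X, le x y ↔ key x ≤ key y)
    (hface : ∀ x ∈ X,
      IsFace {u ∈ X | key u < key x} {y ∈ X | key y = key x} {w ∈ X | key x < key w}) :
    IsConvexPreorder X le := by
  refine ⟨fun x hx => (hkey x hx x hx).2 le_rfl, fun x hx y hy z hz hxy hyz => ?_,
    fun x hx y hy => ?_, fun x hx => ?_⟩
  · rw [hkey x hx y hy] at hxy
    rw [hkey y hy z hz] at hyz
    exact (hkey x hx z hz).2 (hxy.trans hyz)
  · rw [hkey x hx y hy, hkey y hy x hx]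
    exact le_total _ _
  · rw [strictBelow_eq_of_key hkey hx, eqClass_eq_of_key hkey hx,
      strictAbove_eq_of_key hkey hx]
    exact hface x hx

end Key

section Hset

variable {n m : ℕ} (hn : 0 < n)

def leadCoords (m : ℕ) : (Fin n → ℝ) →ₗ[ℝ] Fin n → ℝ where
  toFun y j := if 0 < (j : ℕ) ∧ (j : ℕ) < m then y j else 0
  map_add' y z := by ext j; split_ifs with h <;> simp [h]
  map_smul' c y := by ext j; split_ifs with h <;> simp [h]

noncomputable def leadRatios (m : ℕ) (x : Fin n → ℝ) : Fin n → ℝ :=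
  fun j => if 0 < (j : ℕ) ∧ (j : ℕ) < m then x j / x ⟨0, hn⟩ else 0

noncomputable def leHKey (m : ℕ) (x : Fin n → ℝ) : WithTop (Lex (Fin n → ℝ)) :=
  if x ⟨0, hn⟩ = 0 then ⊤ else (toLex (leadRatios hn m x) : Lex (Fin n → ℝ))

noncomputable def ratioDefect (m : ℕ) (x : Fin n → ℝ) : (Fin n → ℝ) →ₗ[ℝ] Lex (Fin n → ℝ) :=
  (toLexLinearEquiv ℝ (Fin n → ℝ)).toLinearMap ∘ₗ
    (leadCoords m - (LinearMap.proj ⟨0, hn⟩).smulRight (leadRatios hn m x))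

lemma zero_le_of_mem_Hset {x : Fin n → ℝ} (hx : x ∈ Hset n m) : 0 ≤ x ⟨0, hn⟩ := by
  obtain ⟨k, -, hzero, hpos⟩ := hx
  rcases Nat.eq_zero_or_pos k with hk | hk
  · exact (Fin.ext hk : k = ⟨0, hn⟩) ▸ hpos.le
  · exact (hzero ⟨0, hn⟩ hk).ge

lemma leadRatios_eq_iff {x y : Fin n → ℝ} : leadRatios hn m x = leadRatios hn m y ↔
    ∀ j : Fin n, 0 < (j : ℕ) → (j : ℕ) < m → x j / x ⟨0, hn⟩ = y j / y ⟨0, hn⟩ := by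
  simp only [funext_iff, leadRatios]
  refine forall_congr' fun j => ?_
  split_ifs with hj
  · simp [hj]
  · exact iff_of_true rfl fun hj₁ hj₂ => (hj ⟨hj₁, hj₂⟩).elim

lemma toLex_leadRatios_lt_iff {x y : Fin n → ℝ} :
    toLex (leadRatios hn m x) < toLex (leadRatios hn m y) ↔
      ∃ k : Fin n, 0 < (k : ℕ) ∧ (k : ℕ) < m ∧
        (∀ j : Fin n, 0 < (j : ℕ) → j < k → x j / x ⟨0, hn⟩ = y j / y ⟨0, hn⟩) ∧
        x k / x ⟨0, hn⟩ < y k / y ⟨0, hn⟩ := by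
  constructor
  · rintro ⟨k, hbefore, hk⟩
    have hkm : 0 < (k : ℕ) ∧ (k : ℕ) < m := by
      by_contra h
      simp [leadRatios, h] at hk
    refine ⟨k, hkm.1, hkm.2, fun j hj hjk => ?_, by simpa [leadRatios, hkm] using hk⟩
    have hjm : 0 < (j : ℕ) ∧ (j : ℕ) < m := ⟨hj, (show (j : ℕ) < k from hjk).trans hkm.2⟩
    simpa [leadRatios, hjm] using hbefore j hjk
  · rintro ⟨k, hk, hkm, hbefore, hlt⟩
    refine ⟨k, fun j hjk => ?_, by simpa [leadRatios, hk, hkm] using hlt⟩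
    by_cases hj : 0 < (j : ℕ)
    · simp [leadRatios, hj, (show (j : ℕ) < k from hjk).trans hkm, hbefore j hj hjk]
    · simp [leadRatios, hj]

lemma leH_iff_leHKey_le {x y : Fin n → ℝ} (hx : 0 ≤ x ⟨0, hn⟩) (hy : 0 ≤ y ⟨0, hn⟩) :
    leH n m hn x y ↔ leHKey hn m x ≤ leHKey hn m y := by
  rcases hx.eq_or_lt with hx0 | hx0 <;> rcases hy.eq_or_lt with hy0 | hy0
  · simp [leH, leHKey, ← hx0, ← hy0]
  · simp [leH, leHKey, ← hx0, hy0.ne']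
  · simp [leH, leHKey, ← hy0, hx0]
  · have hkey : leHKey hn m x ≤ leHKey hn m y ↔
        toLex (leadRatios hn m x) ≤ toLex (leadRatios hn m y) := by
      simp [leHKey, hx0.ne', hy0.ne']
    rw [hkey, le_iff_eq_or_lt, toLex_inj, leadRatios_eq_iff]
    simp only [leH, hx0, hy0, hx0.ne', hy0.ne', true_and, and_false, false_or]
    exact or_congr_right (toLex_leadRatios_lt_iff hn).symm

lemma leHKey_eq_top_iff {x : Fin n → ℝ} : leHKey hn m x = ⊤ ↔ x ⟨0, hn⟩ = 0 := by
  simp [leHKey]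

lemma leHKey_of_ne_zero {x : Fin n → ℝ} (hx0 : x ⟨0, hn⟩ ≠ 0) :
    leHKey hn m x = (toLex (leadRatios hn m x) : Lex (Fin n → ℝ)) :=
  if_neg hx0

lemma ratioDefect_apply (x y : Fin n → ℝ) :
    ratioDefect hn m x y = toLex (leadCoords m y - y ⟨0, hn⟩ • leadRatios hn m x) :=
  rfl

lemma smul_leadRatios {y : Fin n → ℝ} (hy0 : y ⟨0, hn⟩ ≠ 0) :
    y ⟨0, hn⟩ • leadRatios hn m y = leadCoords m y := by
  ext j
  simp only [Pi.smul_apply, leadRatios, leadCoords, LinearMap.coe_mk, AddHom.coe_mk, smul_eq_mul]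
  split_ifs
  exacts [mul_div_cancel₀ _ hy0, mul_zero _]

lemma ratioDefect_eq_smul {x y : Fin n → ℝ} (hy0 : y ⟨0, hn⟩ ≠ 0) :
    ratioDefect hn m x y = y ⟨0, hn⟩ • (toLex (leadRatios hn m y) - toLex (leadRatios hn m x)) := by
  rw [ratioDefect_apply, ← smul_leadRatios hn hy0, ← smul_sub]
  rfl

lemma ratioDefect_pos_of_eq_zero {x y : Fin n → ℝ} (hy : y ∈ Hset n m) (hy0 : y ⟨0, hn⟩ = 0) :
    0 < ratioDefect hn m x y := by
  obtain ⟨k, hkm, hzero, hpos⟩ := hy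
  have hk : 0 < (k : ℕ) :=
    Nat.pos_of_ne_zero fun hk => hpos.ne' ((Fin.ext hk : k = ⟨0, hn⟩) ▸ hy0)
  refine ⟨k, fun j hjk => ?_, ?_⟩
  · show (0 : ℝ) = _
    simp [ratioDefect_apply, hy0, leadCoords, hzero j hjk]
  · show (0 : ℝ) < _
    simpa [ratioDefect_apply, hy0, leadCoords, hk, hkm] using hpos

lemma ratioDefect_ne_zero (hm : 1 < m) (hmn : m ≤ n) (x : Fin n → ℝ) : ratioDefect hn m x ≠ 0 := by
  set e : Fin n → ℝ := Pi.single ⟨1, by omega⟩ 1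
  have he : e ∈ Hset n m :=
    ⟨⟨1, by omega⟩, hm, fun j hj => Pi.single_eq_of_ne hj.ne _, by simp [e]⟩
  have he0 : e ⟨0, hn⟩ = 0 := Pi.single_eq_of_ne (by simp) _
  intro h
  have hpos := ratioDefect_pos_of_eq_zero hn (x := x) he he0
  rw [h, LinearMap.zero_apply] at hpos
  exact hpos.false

lemma separates_neg_proj {x : Fin n → ℝ} (hx0 : x ⟨0, hn⟩ = 0) :
    Separates (-LinearMap.proj (R := ℝ) (φ := fun _ : Fin n => ℝ) ⟨0, hn⟩)
      {u ∈ Hset n m | leHKey hn m u < leHKey hn m x}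
      {y ∈ Hset n m | leHKey hn m y = leHKey hn m x}
      {w ∈ Hset n m | leHKey hn m x < leHKey hn m w} := by
  have hxkey : leHKey hn m x = ⊤ := (leHKey_eq_top_iff hn).2 hx0
  refine ⟨fun u ⟨hu, hlt⟩ => ?_, fun y ⟨_, hy⟩ => ?_, fun w ⟨_, hlt⟩ => ?_⟩
  · have hu0 : u ⟨0, hn⟩ ≠ 0 := fun h => hlt.ne (by rw [hxkey, leHKey_eq_top_iff hn]; exact h)
    simpa using (zero_le_of_mem_Hset hn hu).lt_of_ne' hu0
  · simpa [hxkey, leHKey_eq_top_iff hn] using hy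
  · exact absurd hlt (hxkey ▸ not_top_lt)

lemma separates_ratioDefect {x : Fin n → ℝ} (hx0 : 0 < x ⟨0, hn⟩) :
    Separates (ratioDefect hn m x)
      {u ∈ Hset n m | leHKey hn m u < leHKey hn m x}
      {y ∈ Hset n m | leHKey hn m y = leHKey hn m x}
      {w ∈ Hset n m | leHKey hn m x < leHKey hn m w} := by
  have hxkey := leHKey_of_ne_zero hn (m := m) hx0.ne'
  refine ⟨fun u ⟨hu, hlt⟩ => ?_, fun y ⟨_, hy⟩ => ?_, fun w ⟨hw, hlt⟩ => ?_⟩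
  · have hu0 : u ⟨0, hn⟩ ≠ 0 := fun h => not_top_lt ((leHKey_eq_top_iff hn).2 h ▸ hlt)
    rw [leHKey_of_ne_zero hn hu0, hxkey, WithTop.coe_lt_coe] at hlt
    rw [ratioDefect_eq_smul hn hu0]
    exact smul_neg_of_pos_of_neg ((zero_le_of_mem_Hset hn hu).lt_of_ne' hu0) (sub_neg.2 hlt)
  · have hy0 : y ⟨0, hn⟩ ≠ 0 := fun h =>
      hx0.ne' ((leHKey_eq_top_iff hn).1 (hy ▸ (leHKey_eq_top_iff hn).2 h))
    rw [leHKey_of_ne_zero hn hy0, hxkey, WithTop.coe_inj, toLex_inj] at hy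
    rw [ratioDefect_eq_smul hn hy0, hy, sub_self, smul_zero]
  · by_cases hw0 : w ⟨0, hn⟩ = 0
    · exact ratioDefect_pos_of_eq_zero hn hw hw0
    · rw [leHKey_of_ne_zero hn hw0, hxkey, WithTop.coe_lt_coe] at hlt
      rw [ratioDefect_eq_smul hn hw0]
      exact smul_pos ((zero_le_of_mem_Hset hn hw).lt_of_ne' hw0) (sub_pos.2 hlt)

end Hset

/-- For `1 < m ≤ n`, the preorder `leH` is a convex preorder on
`Hset n m ⊆ ℝⁿ`, and every equivalence class spans a proper subspace of `ℝⁿ`. -/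
theorem leH_isConvexPreorder (n m : ℕ) (hm : 1 < m) (hmn : m ≤ n) :
    IsConvexPreorder (Hset n m) (leH n m (by omega)) ∧
    ∀ x ∈ Hset n m,
      Module.finrank ℝ
        (Submodule.span ℝ (eqClass (leH n m (by omega)) x (Hset n m))) < n := by
  have hn : 0 < n := by omega
  have hkey : ∀ x ∈ Hset n m, ∀ y ∈ Hset n m, leH n m hn x y ↔ leHKey hn m x ≤ leHKey hn m y :=
    fun x hx y hy => leH_iff_leHKey_le hn (zero_le_of_mem_Hset hn hx) (zero_le_of_mem_Hset hn hy)
  refine ⟨isConvexPreorder_of_key hkey fun x hx => ?_, fun x hx => ?_⟩ <;>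
    rcases (zero_le_of_mem_Hset hn hx).eq_or_lt with hx0 | hx0
  · exact (separates_neg_proj hn hx0.symm).isFace
  · exact (separates_ratioDefect hn hx0).isFace
  · rw [eqClass_eq_of_key hkey hx]
    exact (finrank_span_lt_of_forall_map_eq_zero _ (neg_ne_zero.2 fun h =>
      one_ne_zero (LinearMap.congr_fun h fun _ => (1 : ℝ)))
      (separates_neg_proj hn hx0.symm).eq_zero).trans_eq (Module.finrank_fin_fun ℝ)
  · rw [eqClass_eq_of_key hkey hx]
    exact (finrank_span_lt_of_forall_map_eq_zero _ (ratioDefect_ne_zero hn hm hmn x)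
      (separates_ratioDefect hn hx0).eq_zero).trans_eq (Module.finrank_fin_fun ℝ)
end

section
/- Let $V$ be a finite-dimensional real vector space and $X \subset V \setminus \{0\}$ with $\operatorname{span}_{\ge 0}X \cap (-\operatorname{span}_{\ge 0}X) = \{0\}$. Then for any convex preorder $\preceq$ on $X$, there exists a convex order on $X$ refining $\preceq$. -/
/-!
Since the cone spanned by `X` is salient, repeatedly choosing a supporting hyperplane yields an
injective linear map `F : V → ℝ^ℕ` sending `X` to lexicographically positive vectors. A positive
vector `u` has a leading index `k` (its first nonzero coordinate) and a normalisation `u / u k`.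
Rays are ordered lexicographically by this pair, and each class of `⪯` is split by the ray order.
The result is convex because, for `x` with leading index `k`, the linear map
`v ↦ ± (F x k • F v - F v k • F x)`, with sign `-` exactly on the coordinates below `k`,
kills `x` and is lexicographically negative on the rays below that of `x`, positive above it.
-/

open scoped BigOperators

open Module Function

section Cone

variable {V : Type*} [AddCommGroup V] [Module ℝ V]

theorem mem_nnspan_iff {S : Set V} {x : V} : x ∈ nnspan S ↔ x ∈ PointedCone.hull ℝ S := by
  rw [PointedCone.hull, Submodule.mem_span_set']
  constructor
  · rintro ⟨n, c, v, hc, hv, rfl⟩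
    exact ⟨n, fun i => ⟨c i, hc i⟩, fun i => ⟨v i, hv i⟩, rfl⟩
  · rintro ⟨n, c, v, rfl⟩
    exact ⟨n, fun i => c i, fun i => v i, fun i => (c i).2, fun i => (v i).2, rfl⟩

theorem mem_nnspan_union {S T : Set V} {x : V} :
    x ∈ nnspan (S ∪ T) ↔ ∃ a ∈ PointedCone.hull ℝ S, ∃ b ∈ PointedCone.hull ℝ T, a + b = x := by
  rw [mem_nnspan_iff, PointedCone.hull, Submodule.span_union, Submodule.mem_sup]

theorem salient_hull_preimage {W : Type*} [AddCommGroup W] [Module ℝ W] {X : Set V}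
    (hX : (PointedCone.hull ℝ X : ConvexCone ℝ V).Salient) {f : W →ₗ[ℝ] V} (hf : Injective f) :
    (PointedCone.hull ℝ (f ⁻¹' X) : ConvexCone ℝ W).Salient := by
  have hmap : ∀ w ∈ PointedCone.hull ℝ (f ⁻¹' X), f w ∈ PointedCone.hull ℝ X := fun w hw =>
    Submodule.span_preimage_le (f.restrictScalars {c : ℝ // 0 ≤ c}) X hw
  intro w hw hw0 hnw
  refine hX (f w) (hmap w hw) (fun h => hw0 (hf (by rw [h, map_zero]))) ?_
  simpa using hmap (-w) hnw

theorem map_nonneg_and_eq_zero_of_mem_hull {W : Type*} [AddCommGroup W] [PartialOrder W]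
    [IsOrderedAddMonoid W] [Module ℝ W] [PosSMulMono ℝ W] (G : V →ₗ[ℝ] W) {B : Set V}
    (hB : ∀ y ∈ B, 0 < G y) {b : V} (hb : b ∈ PointedCone.hull ℝ B) :
    0 ≤ G b ∧ (G b = 0 → b = 0) := by
  induction hb using Submodule.span_induction with
  | mem y hy => exact ⟨(hB y hy).le, fun h => absurd h (hB y hy).ne'⟩
  | zero => simp
  | add y z _ _ hy hz =>
    refine ⟨by rw [map_add]; exact add_nonneg hy.1 hz.1, fun h => ?_⟩
    rw [map_add, add_eq_zero_iff_of_nonneg hy.1 hz.1] at h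
    rw [hy.2 h.1, hz.2 h.2, add_zero]
  | smul c y _ hy =>
    have hc : c • y = (c : ℝ) • y := rfl
    rw [hc, map_smul]
    refine ⟨smul_nonneg c.2 hy.1, fun h => ?_⟩
    rcases smul_eq_zero.1 h with h | h
    · rw [h, zero_smul]
    · rw [hy.2 h, smul_zero]

end Cone

section Separation

theorem Convex.closure_ne_univ_of_salient {E : Type*} [NormedAddCommGroup E] [NormedSpace ℝ E]
    [FiniteDimensional ℝ E] [Nontrivial E] {s : Set E} (hs : Convex ℝ s)
    (hsal : ∀ x ∈ s, -x ∈ s → x = 0) : closure s ≠ Set.univ := by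
  intro hdense
  have hspan : affineSpan ℝ s = ⊤ := by
    have hcl :=
      closure_minimal (subset_affineSpan ℝ s) (affineSpan ℝ s).closed_of_finiteDimensional
    exact eq_top_iff.2 fun x _ => hcl (hdense ▸ Set.mem_univ x)
  have hint : interior s = Set.univ := by
    rw [← hs.interior_closure_eq_interior_of_nonempty_interior
      (hs.interior_nonempty_iff_affineSpan_eq_top.2 hspan), hdense, interior_univ]
  obtain ⟨v, hv⟩ := exists_ne (0 : E)
  have hmem : ∀ x, x ∈ s := fun x => interior_subset (hint ▸ Set.mem_univ x)
  exact hv (hsal v (hmem v) (hmem (-v)))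

theorem PointedCone.exists_dual_ne_zero_nonneg_of_salient {V : Type*} [AddCommGroup V]
    [Module ℝ V] [FiniteDimensional ℝ V] [Nontrivial V] {C : PointedCone ℝ V}
    (hC : (C : ConvexCone ℝ V).Salient) : ∃ f : Dual ℝ V, f ≠ 0 ∧ ∀ x ∈ C, 0 ≤ f x := by
  let e := (finBasis ℝ V).equivFun
  let C' := C.map e.toLinearMap
  have : Nontrivial (Fin (finrank ℝ V) → ℝ) := e.symm.nontrivial
  have hsal' : ∀ y ∈ C', -y ∈ C' → y = 0 := by
    rintro _ ⟨x, hx, rfl⟩ ⟨x', hx', hx'e⟩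
    obtain rfl : x' = -x := e.injective (by simpa using hx'e)
    by_contra h
    exact hC x hx (fun h0 => h (by simp [h0])) hx'
  obtain ⟨y₀, hy₀⟩ : ∃ y₀, y₀ ∉ closure (C' : Set (Fin (finrank ℝ V) → ℝ)) := by
    by_contra! h
    exact C'.convex.closure_ne_univ_of_salient hsal' (Set.eq_univ_of_forall h)
  obtain ⟨g, hg, hgy₀⟩ := ProperCone.hyperplane_separation_point (Submodule.closure C') hy₀
  refine ⟨g.toLinearMap ∘ₗ e.toLinearMap, fun h => hgy₀.ne ?_,
    fun x hx => hg _ (subset_closure ⟨x, hx, rfl⟩)⟩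
  simpa using LinearMap.congr_fun h (e.symm y₀)

end Separation

section LexOrder

instance {ι : Type*} [LinearOrder ι] : PosSMulStrictMono ℝ (Lex (ι → ℝ)) :=
  ⟨fun c hc _ _ ⟨i, hi, hlt⟩ =>
    ⟨i, fun j hj => congrArg (c * ·) (hi j hj), mul_lt_mul_of_pos_left hlt hc⟩⟩

theorem Pi.Lex.pos_iff {ι : Type*} [LinearOrder ι] {u : Lex (ι → ℝ)} :
    0 < u ↔ ∃ i, (∀ j < i, u j = 0) ∧ 0 < u i :=
  exists_congr fun _ => and_congr_left' <| forall₂_congr fun _ _ => eq_comm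

theorem Pi.Lex.neg_iff {ι : Type*} [LinearOrder ι] {u : Lex (ι → ℝ)} :
    u < 0 ↔ ∃ i, (∀ j < i, u j = 0) ∧ u i < 0 :=
  Iff.rfl

/-- Index of the first nonzero coordinate (`0` for the zero vector, as `sInf ∅ = 0`). -/
noncomputable def leadIdx (u : Lex (ℕ → ℝ)) : ℕ := sInf {j | u j ≠ 0}

theorem leadIdx_eq {u : Lex (ℕ → ℝ)} {i : ℕ} (h : ∀ j < i, u j = 0) (hi : u i ≠ 0) :
    leadIdx u = i :=
  le_antisymm (Nat.sInf_le hi)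
    (not_lt.1 fun hlt => Nat.sInf_mem (s := {j | u j ≠ 0}) ⟨i, hi⟩ (h _ hlt))

theorem pos_iff_leadIdx {u : Lex (ℕ → ℝ)} :
    0 < u ↔ (∀ j < leadIdx u, u j = 0) ∧ 0 < u (leadIdx u) := by
  refine ⟨fun hu => ?_, fun hu => Pi.Lex.pos_iff.2 ⟨_, hu⟩⟩
  obtain ⟨i, hi, hpos⟩ := Pi.Lex.pos_iff.1 hu
  rw [leadIdx_eq hi hpos.ne']
  exact ⟨hi, hpos⟩

noncomputable def rayKey (u : Lex (ℕ → ℝ)) : Lex (ℕ × Lex (ℕ → ℝ)) :=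
  toLex (leadIdx u, (u (leadIdx u))⁻¹ • u)

theorem rayKey_smul {t : ℝ} (ht : t ≠ 0) (u : Lex (ℕ → ℝ)) : rayKey (t • u) = rayKey u := by
  have hlead : leadIdx (t • u) = leadIdx u := by
    simp only [leadIdx]
    congr 1
    ext j
    exact mul_ne_zero_iff.trans (and_iff_right ht)
  simp only [rayKey, hlead]
  congr 2
  change (t * u (leadIdx u))⁻¹ • t • u = _
  rw [smul_smul, mul_inv_rev, mul_assoc, inv_mul_cancel₀ ht, mul_one]

theorem exists_smul_eq_of_rayKey_eq {u v : Lex (ℕ → ℝ)} (hv : 0 < v)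
    (h : rayKey v = rayKey u) : ∃ t : ℝ, v = t • u := by
  simp only [rayKey, toLex_inj, Prod.mk.injEq] at h
  obtain ⟨-, hnorm⟩ := h
  refine ⟨v (leadIdx v) * (u (leadIdx u))⁻¹, ?_⟩
  rw [mul_smul, ← hnorm, smul_smul, mul_inv_cancel₀ (pos_iff_leadIdx.1 hv).2.ne', one_smul]

noncomputable def raySep (u : Lex (ℕ → ℝ)) : Lex (ℕ → ℝ) →ₗ[ℝ] Lex (ℕ → ℝ) where
  toFun v := toLex fun j =>
    (if j < leadIdx u then -1 else 1) * (u (leadIdx u) * v j - v (leadIdx u) * u j)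
  map_add' v w := by
    funext j
    change _ * (_ * (v j + w j) - (v _ + w _) * _) = _ * (_ - _) + _ * (_ - _)
    ring
  map_smul' c v := by
    funext j
    change _ * (_ * (c * v j) - (c * v _) * _) = c * (_ * (_ - _))
    ring

theorem raySep_apply (u v : Lex (ℕ → ℝ)) (j : ℕ) :
    raySep u v j =
      (if j < leadIdx u then -1 else 1) * (u (leadIdx u) * v j - v (leadIdx u) * u j) :=
  rfl

theorem raySep_eq_smul_of_leadIdx_eq {u v : Lex (ℕ → ℝ)} (hu : 0 < u) (hv : 0 < v)
    (h : leadIdx v = leadIdx u) :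
    raySep u v = (u (leadIdx u) * v (leadIdx v)) •
      ((v (leadIdx v))⁻¹ • v - (u (leadIdx u))⁻¹ • u) := by
  obtain ⟨hu0, hupos⟩ := pos_iff_leadIdx.1 hu
  obtain ⟨hv0, hvpos⟩ := pos_iff_leadIdx.1 hv
  rw [h] at hv0 hvpos ⊢
  funext j
  rw [raySep_apply]
  change _ = u (leadIdx u) * v (leadIdx u) *
    ((v (leadIdx u))⁻¹ * v j - (u (leadIdx u))⁻¹ * u j)
  by_cases hj : j < leadIdx u
  · simp [hu0 j hj, hv0 j hj]
  · rw [if_neg hj]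
    field_simp

theorem raySep_neg_of_rayKey_lt {u v : Lex (ℕ → ℝ)} (hu : 0 < u) (hv : 0 < v)
    (h : rayKey v < rayKey u) : raySep u v < 0 := by
  obtain ⟨hu0, hupos⟩ := pos_iff_leadIdx.1 hu
  obtain ⟨hv0, hvpos⟩ := pos_iff_leadIdx.1 hv
  rcases Prod.Lex.toLex_lt_toLex.1 h with hlt | ⟨heq, hlt⟩
  · refine Pi.Lex.neg_iff.2 ⟨leadIdx v, fun j hj => ?_, ?_⟩
    · simp [raySep_apply, hv0 j hj, hu0 j (hj.trans hlt)]
    · simp [raySep_apply, hlt, hu0 _ hlt, mul_pos hupos hvpos]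
  · rw [raySep_eq_smul_of_leadIdx_eq hu hv heq]
    exact smul_neg_of_pos_of_neg (mul_pos hupos hvpos) (sub_neg.2 hlt)

theorem raySep_pos_of_rayKey_lt {u v : Lex (ℕ → ℝ)} (hu : 0 < u) (hv : 0 < v)
    (h : rayKey u < rayKey v) : 0 < raySep u v := by
  obtain ⟨hu0, hupos⟩ := pos_iff_leadIdx.1 hu
  obtain ⟨hv0, hvpos⟩ := pos_iff_leadIdx.1 hv
  rcases Prod.Lex.toLex_lt_toLex.1 h with hlt | ⟨heq, hlt⟩
  · refine Pi.Lex.pos_iff.2 ⟨leadIdx v, fun j hj => ?_, ?_⟩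
    · simp [raySep_apply, hv0 j hj, hv0 _ hlt]
    · simp [raySep_apply, not_lt.2 hlt.le, hv0 _ hlt, mul_pos hupos hvpos]
  · rw [raySep_eq_smul_of_leadIdx_eq hu hv heq.symm]
    exact smul_pos (mul_pos hupos hvpos) (sub_pos.2 hlt)

theorem raySep_self (u : Lex (ℕ → ℝ)) : raySep u u = 0 := by
  funext j
  change _ * (_ - _) = (0 : ℝ)
  ring

end LexOrder

section Embedding

variable {V : Type*} [AddCommGroup V] [Module ℝ V]

def lexCons (f : V →ₗ[ℝ] ℝ) (F : V →ₗ[ℝ] Lex (ℕ → ℝ)) : V →ₗ[ℝ] Lex (ℕ → ℝ) where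
  toFun v := toLex fun n => if n = 0 then f v else F v (n - 1)
  map_add' v w := by
    funext n
    change (if n = 0 then f (v + w) else F (v + w) (n - 1)) =
      (if n = 0 then f v else F v (n - 1)) + (if n = 0 then f w else F w (n - 1))
    split_ifs
    exacts [map_add f v w, congrFun (map_add F v w) (n - 1)]
  map_smul' c v := by
    funext n
    change (if n = 0 then f (c • v) else F (c • v) (n - 1)) =
      c * (if n = 0 then f v else F v (n - 1))
    split_ifs
    exacts [map_smul f c v, congrFun (map_smul F c v) (n - 1)]

theorem lexCons_eq_zero {f : V →ₗ[ℝ] ℝ} {F : V →ₗ[ℝ] Lex (ℕ → ℝ)} {v : V}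
    (h : lexCons f F v = 0) : f v = 0 ∧ F v = 0 :=
  ⟨congrFun h 0, funext fun n => congrFun h (n + 1)⟩

theorem lexCons_pos {f : V →ₗ[ℝ] ℝ} {F : V →ₗ[ℝ] Lex (ℕ → ℝ)} {v : V} (hf : 0 ≤ f v)
    (hF : f v = 0 → 0 < F v) : 0 < lexCons f F v := by
  rcases hf.lt_or_eq with hf | hf
  · exact Pi.Lex.pos_iff.2 ⟨0, fun j hj => absurd hj (Nat.not_lt_zero j), hf⟩
  obtain ⟨i, hi, hpos⟩ := Pi.Lex.pos_iff.1 (hF hf.symm)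
  refine Pi.Lex.pos_iff.2 ⟨i + 1, fun j hj => ?_, hpos⟩
  rcases j with _ | j
  · exact hf.symm
  · exact hi j (Nat.succ_lt_succ_iff.1 hj)

variable [FiniteDimensional ℝ V] {X : Set V}

theorem exists_lex_pos_injOn_submodule (hX0 : (0 : V) ∉ X)
    (hX : (PointedCone.hull ℝ X : ConvexCone ℝ V).Salient) (W : Submodule ℝ V) :
    ∃ F : V →ₗ[ℝ] Lex (ℕ → ℝ), (∀ w ∈ W, F w = 0 → w = 0) ∧ ∀ x ∈ X, x ∈ W → 0 < F x := by
  induction W using WellFoundedLT.induction with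
  | _ W ih =>
  rcases eq_or_ne W ⊥ with rfl | hW
  · refine ⟨0, fun w hw _ => (Submodule.mem_bot ℝ).1 hw, fun x hx hxW => ?_⟩
    exact absurd ((Submodule.mem_bot ℝ).1 hxW ▸ hx) hX0
  have := Submodule.nontrivial_iff_ne_bot.2 hW
  obtain ⟨fW, hfW0, hfW⟩ := PointedCone.exists_dual_ne_zero_nonneg_of_salient
    (salient_hull_preimage hX W.injective_subtype)
  obtain ⟨f, rfl⟩ := LinearMap.exists_extend fW
  obtain ⟨w, hw⟩ : ∃ w : W, f w ≠ 0 := not_forall.1 fun h => hfW0 (LinearMap.ext h)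
  obtain ⟨F, hF0, hFpos⟩ := ih (W ⊓ LinearMap.ker f)
    (inf_le_left.lt_of_ne fun h => hw (h.symm ▸ w.2 : (w : V) ∈ W ⊓ LinearMap.ker f).2)
  refine ⟨lexCons f F, fun v hv h0 => ?_, fun x hx hxW => lexCons_pos ?_ fun hfx => ?_⟩
  · obtain ⟨hfv, hFv⟩ := lexCons_eq_zero h0
    exact hF0 v ⟨hv, hfv⟩ hFv
  · exact hfW ⟨x, hxW⟩ (PointedCone.subset_hull hx)
  · exact hFpos x hx ⟨hxW, hfx⟩

theorem exists_injective_lex_pos (hX0 : (0 : V) ∉ X)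
    (hX : (PointedCone.hull ℝ X : ConvexCone ℝ V).Salient) :
    ∃ F : V →ₗ[ℝ] Lex (ℕ → ℝ), Injective F ∧ ∀ x ∈ X, 0 < F x := by
  obtain ⟨F, hF0, hFpos⟩ := exists_lex_pos_injOn_submodule hX0 hX ⊤
  exact ⟨F, (injective_iff_map_eq_zero F).2 fun v => hF0 v trivial,
    fun x hx => hFpos x hx trivial⟩

end Embedding

section Refinement

variable {V : Type*} [AddCommGroup V] [Module ℝ V] {K : Type*} [LinearOrder K]

def lexRefine (le : V → V → Prop) (κ : V → K) (y z : V) : Prop :=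
  le y z ∧ (le z y → κ y ≤ κ z)

variable {le : V → V → Prop} {κ : V → K} {X : Set V}

theorem IsConvexPreorder.mem_eqClass_of_mem_span (hle : IsConvexPreorder X le)
    (hX0 : (0 : V) ∉ X) {x y : V} (hx : x ∈ X) (hy : y ∈ X) (h : y ∈ Submodule.span ℝ (eqClass le x X)) :
    y ∈ eqClass le x X := by
  obtain ⟨-, -, htotal, hface⟩ := hle
  have hy0 : y ≠ 0 := fun h0 => hX0 (h0 ▸ hy)
  have hzero : ∀ S : Set V, (0 : V) ∈ nnspan S := fun S => mem_nnspan_iff.2 (zero_mem _)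
  refine ⟨hy, by_contra fun hxy => ?_, by_contra fun hyx => ?_⟩
  · have hbelow : y ∈ nnspan (strictBelow le x X) :=
      mem_nnspan_iff.2 (PointedCone.subset_hull ⟨hy, (htotal x hx y hy).resolve_left hxy, hxy⟩)
    exact hy0 (hface x hx y hbelow 0 (hzero _) (by simpa using h)).1
  · have habove : y ∈ nnspan (strictAbove le x X) :=
      mem_nnspan_iff.2 (PointedCone.subset_hull ⟨hy, (htotal x hx y hy).resolve_right hyx, hyx⟩)
    exact hy0 (hface x hx 0 (hzero _) y habove (by simpa using neg_mem h)).2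

omit [AddCommGroup V] [Module ℝ V] in
theorem lexRefine_strict_of_strict {x y : V} (h : le x y ∧ ¬ le y x) :
    lexRefine le κ x y ∧ ¬ lexRefine le κ y x :=
  ⟨⟨h.1, fun h' => absurd h' h.2⟩, fun h' => h.2 h'.1⟩

theorem strictBelow_lexRefine (x : V) : strictBelow (lexRefine le κ) x X =
    strictBelow le x X ∪ {y ∈ eqClass le x X | κ y < κ x} := by
  ext y
  simp only [strictBelow, eqClass, lexRefine, Set.mem_union, Set.mem_ofPred_eq]
  by_cases hxy : le x y <;> by_cases hyx : le y x <;> simp [hxy, hyx]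
  exact fun _ => le_of_lt

theorem strictAbove_lexRefine (x : V) : strictAbove (lexRefine le κ) x X =
    strictAbove le x X ∪ {y ∈ eqClass le x X | κ x < κ y} := by
  ext y
  simp only [strictAbove, eqClass, lexRefine, Set.mem_union, Set.mem_ofPred_eq]
  by_cases hxy : le x y <;> by_cases hyx : le y x <;> simp [hxy, hyx]
  exact fun _ => le_of_lt

theorem eqClass_lexRefine (x : V) :
    eqClass (lexRefine le κ) x X = {y ∈ eqClass le x X | κ y = κ x} := by
  ext y
  simp only [eqClass, lexRefine, Set.mem_ofPred_eq]
  by_cases hxy : le x y <;> by_cases hyx : le y x <;>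
    simp [hxy, hyx, le_antisymm_iff, and_comm]

theorem IsConvexPreorder.lexRefine (hle : IsConvexPreorder X le)
    (hκ : ∀ x ∈ X, ∀ a ∈ nnspan {y ∈ eqClass le x X | κ y < κ x},
      ∀ b ∈ nnspan {y ∈ eqClass le x X | κ x < κ y},
      a - b ∈ Submodule.span ℝ {y ∈ eqClass le x X | κ y = κ x} → a = 0 ∧ b = 0) :
    IsConvexPreorder X (lexRefine le κ) := by
  obtain ⟨hrefl, htrans, htotal, hface⟩ := hle
  refine ⟨fun x hx => ⟨hrefl x hx, fun _ => le_rfl⟩, ?_, ?_, ?_⟩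
  · rintro x hx y hy z hz ⟨hxy, hyx⟩ ⟨hyz, hzy⟩
    refine ⟨htrans x hx y hy z hz hxy hyz, fun hzx => ?_⟩
    exact (hyx (htrans y hy z hz x hx hyz hzx)).trans (hzy (htrans z hz x hx y hy hzx hxy))
  · intro x hx y hy
    by_cases hxy : le x y <;> by_cases hyx : le y x
    · exact (le_total (κ x) (κ y)).imp (fun h => ⟨hxy, fun _ => h⟩) (fun h => ⟨hyx, fun _ => h⟩)
    · exact Or.inl ⟨hxy, fun h => absurd h hyx⟩
    · exact Or.inr ⟨hyx, fun h => absurd h hxy⟩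
    · exact (htotal x hx y hy).elim (fun h => absurd h hxy) (fun h => absurd h hyx)
  · intro x hx xm hxm xp hxp hspan
    rw [strictBelow_lexRefine, mem_nnspan_union] at hxm
    rw [strictAbove_lexRefine, mem_nnspan_union] at hxp
    rw [eqClass_lexRefine] at hspan
    obtain ⟨m, hm, a, ha, rfl⟩ := hxm
    obtain ⟨p, hp, b, hb, rfl⟩ := hxp
    have hclass : ∀ {S : Set V}, S ⊆ eqClass le x X → ∀ c ∈ PointedCone.hull ℝ S,
        c ∈ Submodule.span ℝ (eqClass le x X) := fun hS c hc =>
      Submodule.span_mono hS (PointedCone.hull_le_span ℝ _ hc)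
    have hmp : m - p ∈ Submodule.span ℝ (eqClass le x X) := by
      rw [show m - p = (m + a - (p + b)) - a + b by abel]
      exact add_mem (sub_mem (Submodule.span_mono (fun y hy => hy.1) hspan)
        (hclass (fun y hy => hy.1) a ha)) (hclass (fun y hy => hy.1) b hb)
    obtain ⟨rfl, rfl⟩ := hface x hx m (mem_nnspan_iff.2 hm) p (mem_nnspan_iff.2 hp) hmp
    obtain ⟨rfl, rfl⟩ :=
      hκ x hx a (mem_nnspan_iff.2 ha) b (mem_nnspan_iff.2 hb) (by simpa using hspan)
    simp

end Refinement

section RayOrder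

variable {V : Type*} [AddCommGroup V] [Module ℝ V] {X : Set V} {le : V → V → Prop}
  {F : V →ₗ[ℝ] Lex (ℕ → ℝ)}

theorem eq_zero_of_sub_mem_span_of_rayKey {x : V} (hx : 0 < F x)
    {A B S : Set V} (hA : ∀ y ∈ A, 0 < F y ∧ rayKey (F y) < rayKey (F x))
    (hB : ∀ y ∈ B, 0 < F y ∧ rayKey (F x) < rayKey (F y))
    (hS : ∀ y ∈ S, 0 < F y ∧ rayKey (F y) = rayKey (F x)) {a b : V}
    (ha : a ∈ PointedCone.hull ℝ A) (hb : b ∈ PointedCone.hull ℝ B)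
    (hab : a - b ∈ Submodule.span ℝ S) : a = 0 ∧ b = 0 := by
  let G := raySep (F x) ∘ₗ F
  have hGS : Submodule.span ℝ S ≤ LinearMap.ker G := Submodule.span_le.2 fun y hy => by
    obtain ⟨t, ht⟩ := exists_smul_eq_of_rayKey_eq (hS y hy).1 (hS y hy).2
    simp [G, ht, raySep_self]
  have hGab : G a = G b := sub_eq_zero.1 (by rw [← map_sub]; exact hGS hab)
  obtain ⟨hGb, hb0⟩ := map_nonneg_and_eq_zero_of_mem_hull G
    (fun y hy => raySep_pos_of_rayKey_lt hx (hB y hy).1 (hB y hy).2) hb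
  obtain ⟨hGa, ha0⟩ := map_nonneg_and_eq_zero_of_mem_hull (-G)
    (fun y hy => neg_pos.2 (raySep_neg_of_rayKey_lt hx (hA y hy).1 (hA y hy).2)) ha
  have hGb0 : G b = 0 := le_antisymm (by simpa [hGab] using hGa) hGb
  exact ⟨ha0 (by simp [hGab, hGb0]), hb0 hGb0⟩

theorem isConvexPreorder_lexRefine_rayKey (hle : IsConvexPreorder X le)
    (hFpos : ∀ x ∈ X, 0 < F x) : IsConvexPreorder X (lexRefine le (rayKey ∘ F)) :=
  hle.lexRefine fun x hx _ ha _ hb hab =>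
    eq_zero_of_sub_mem_span_of_rayKey (hFpos x hx) (fun y hy => ⟨hFpos y hy.1.1, hy.2⟩)
      (fun y hy => ⟨hFpos y hy.1.1, hy.2⟩) (fun y hy => ⟨hFpos y hy.1.1, hy.2⟩)
      (mem_nnspan_iff.1 ha) (mem_nnspan_iff.1 hb) hab

theorem eqClass_lexRefine_rayKey (hle : IsConvexPreorder X le)
    (hX0 : (0 : V) ∉ X) (hF : Injective F) (hFpos : ∀ x ∈ X, 0 < F x) {x : V} (hx : x ∈ X) :
    eqClass (lexRefine le (rayKey ∘ F)) x X = X ∩ {w | ∃ t : ℝ, w = t • x} := by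
  rw [eqClass_lexRefine]
  ext y
  constructor
  · rintro ⟨⟨hy, -⟩, hκ⟩
    obtain ⟨t, ht⟩ := exists_smul_eq_of_rayKey_eq (hFpos y hy) hκ
    exact ⟨hy, t, hF (by rw [ht, map_smul])⟩
  · rintro ⟨hy, t, rfl⟩
    have ht : t ≠ 0 := by rintro rfl; exact hX0 (by simpa using hy)
    refine ⟨hle.mem_eqClass_of_mem_span hX0 hx hy ?_, by simp [map_smul, rayKey_smul ht]⟩
    exact Submodule.smul_mem _ t (Submodule.subset_span ⟨hx, hle.1 x hx, hle.1 x hx⟩)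

end RayOrder

/-- Let `V` be finite-dimensional and `X ⊆ V \ {0}` with
`nnspan X ∩ (-nnspan X) = {0}`. Then any convex preorder `⪯` on `X` admits a refining
convex order, i.e. a convex preorder `⪯'` such that `x ≺ y` implies `x ≺' y`, and
every `⪯'`-equivalence class has the form `X ∩ l` for a line `l` through the origin. -/
theorem exists_convex_order_refining {V : Type*} [AddCommGroup V] [Module ℝ V]
    [FiniteDimensional ℝ V]
    (X : Set V) (hX0 : (0 : V) ∉ X)
    (hsal : nnspan X ∩ (-nnspan X) = {0})
    (le : V → V → Prop) (hconv : IsConvexPreorder X le) :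
    ∃ le' : V → V → Prop,
      IsConvexPreorder X le' ∧
      (∀ x ∈ X, ∀ y ∈ X, (le x y ∧ ¬ le y x) → (le' x y ∧ ¬ le' y x)) ∧
      (∀ x ∈ X, ∃ v : V, eqClass le' x X = X ∩ {w | ∃ t : ℝ, w = t • v}) := by
  have hsalient : (PointedCone.hull ℝ X : ConvexCone ℝ V).Salient := by
    have hX : nnspan X = PointedCone.hull ℝ X := Set.ext fun _ => mem_nnspan_iff
    rwa [PointedCone.salient_iff_inter_neg_eq_singleton, ← hX]
  obtain ⟨F, hFinj, hFpos⟩ := exists_injective_lex_pos hX0 hsalient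
  exact ⟨lexRefine le (rayKey ∘ F), isConvexPreorder_lexRefine_rayKey hconv hFpos,
    fun x _ y _ => lexRefine_strict_of_strict,
    fun x hx => ⟨x, eqClass_lexRefine_rayKey hconv hX0 hFinj hFpos hx⟩⟩
end

section
/- Let $W$ be the Weyl group of a Kac-Moody root system with set of positive roots $\Delta_+$, and let $\underline w = s_{i_1} s_{i_2} \cdots s_{i_l}$ be a reduced expression of $w \in W$. Set $\beta_k = s_{i_1}\cdots s_{i_{k-1}}(\alpha_{i_k})$, so $\Delta_+ \cap w\Delta_- = \{\beta_1, \ldots, \beta_l\}$. Then there exists a convex preorder $\preceq$ on $\Delta_+$ such that $\beta_1 \prec \beta_2 \prec \cdots \prec \beta_l \prec \gamma$ for every $\gamma \in \Delta_+ \cap w\Delta_+$. -/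
open scoped BigOperators

/-- An abstract (Kac–Moody) root datum: simple roots `α i` in a real vector space `V`,
simple coroots `coroot i` (as linear functionals via the pairing `⟨h_i, ·⟩`), simple
reflections `s i`, and a set of positive roots, with the standard axioms. -/
structure KacMoodyData (I : Type*) (V : Type*) [AddCommGroup V] [Module ℝ V] where
  α : I → V
  coroot : I → (V →ₗ[ℝ] ℝ)
  s : I → (V ≃ₗ[ℝ] V)
  indep : LinearIndependent ℝ α
  coroot_self : ∀ i, coroot i (α i) = 2
  s_apply : ∀ i (v : V), s i v = v - coroot i v • α i
  posRoots : Set V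
  simple_mem : ∀ i, α i ∈ posRoots
  pos_ht : ∀ β ∈ posRoots, ∃ c : I →₀ ℕ, c ≠ 0 ∧ β = c.sum fun i n => (n : ℝ) • α i
  s_perm : ∀ i, ∀ β ∈ posRoots, β ≠ α i → s i β ∈ posRoots

namespace KacMoodyData

variable {I : Type*} {V : Type*} [AddCommGroup V] [Module ℝ V]

/-- The product `s_{f 0} s_{f 1} ⋯ s_{f (l-1)}` of simple reflections. -/
def wordProd (D : KacMoodyData I V) {l : ℕ} (f : Fin l → I) : V ≃ₗ[ℝ] V :=
  (List.ofFn fun k => D.s (f k)).prod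

/-- The length of an element of the Weyl group: the minimal length of an expression
as a product of simple reflections. -/
noncomputable def len (D : KacMoodyData I V) (w : V ≃ₗ[ℝ] V) : ℕ :=
  sInf {l | ∃ f : Fin l → I, w = D.wordProd f}

/-- Membership in the Weyl group (generated by the simple reflections). -/
def InWeyl (D : KacMoodyData I V) (w : V ≃ₗ[ℝ] V) : Prop :=
  ∃ (l : ℕ) (f : Fin l → I), w = D.wordProd f

/-- The Bruhat order: `v ≤ w` iff some reduced expression of `w` contains a
subexpression equal to `v`. -/
def BruhatLe (D : KacMoodyData I V) (v w : V ≃ₗ[ℝ] V) : Prop :=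
  ∃ (l : ℕ) (f : Fin l → I), w = D.wordProd f ∧ D.len w = l ∧
    ∃ (m : ℕ) (g : Fin m → Fin l), StrictMono g ∧ v = D.wordProd (f ∘ g)

/-- The embedding of the positive cone `Q₊` of the root lattice into `V`. -/
def emb (D : KacMoodyData I V) (γ : I →₀ ℕ) : V :=
  γ.sum fun i n => (n : ℝ) • D.α i

end KacMoodyData

/-!
Write `u_p = s_{i_1} ⋯ s_{i_p}` and `A_p = ht ∘ u_p⁻¹`, where `ht` is the height functional.
For a reduced word the inversion set of `u_p` is `{β_1, …, β_p}`, so `A_p(β_k)` is positive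
for `p < k` and negative for `p ≥ k`, while `A_p` is positive on all other positive roots for
every `p ≤ l`. Any such sign pattern yields a convex preorder: put `β_k` at position `k` and
every other root `γ` at position `l + A_l(γ) / A_0(γ)`. The functional
`A_{k-1}(β_k) A_k - A_k(β_k) A_{k-1}` vanishes on the class of `β_k`, is negative below it and
positive above it, and `A_0(γ) A_l - A_l(γ) A_0` does the same for the class of `γ`; this gives
the face condition.

The inversion set grows by `β_{p+1} = u_p(α_{i_{p+1}})` from `u_p` to `u_{p+1}` because this
root is positive, which is Tits' lemma: if `ℓ(u s_j) > ℓ(u)` then `u(α_j) > 0`. Induct on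
`ℓ(u)`; let `t ≠ j` be the last letter of a reduced word for `u`, and write `u = v w` with `w`
alternating in `s_j, s_t` and ending with `s_t`. While the letter `b` continuing the
alternation to the left satisfies `ℓ(v s_b) < ℓ(v)`, move it from `v` into `w`; since `ℓ(u)`
and the number of inversions of `u` have the same parity, `ℓ(v s_b) = ℓ(v) ± 1`. If `s_j s_t`
has finite order `m`, then `w` never reaches length `m`, as the braid relation would shorten
`u s_j`. At the end `v(α_j)` and `v(α_t)` are positive by induction, and `w(α_j)` is a
non-negative combination of `α_j` and `α_t` by a rank-two computation.
-/

open Set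

theorem List.Nodup.getElem_mem_take_iff {α : Type*} {l : List α} (h : l.Nodup) {k : ℕ}
    (hk : k < l.length) (p : ℕ) : l[k] ∈ l.take p ↔ k < p := by
  rw [List.mem_take_iff_getElem]
  constructor
  · rintro ⟨j, hj, hjk⟩
    have := h.getElem_inj_iff.mp hjk
    omega
  · exact fun hkp => ⟨k, by omega, rfl⟩

/-! ### Convex preorders from sign patterns -/

section ConvexPreorder

variable {V : Type*} [AddCommGroup V] [Module ℝ V]

theorem apply_neg_of_mem_nnspan {S : Set V} {H : V →ₗ[ℝ] ℝ} (hS : ∀ y ∈ S, H y < 0)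
    {x : V} (hx : x ∈ nnspan S) (hx0 : x ≠ 0) : H x < 0 := by
  obtain ⟨n, c, v, hc, hv, rfl⟩ := hx
  obtain ⟨t, ht⟩ : ∃ t, c t ≠ 0 := by
    by_contra! h
    exact hx0 (by simp [h])
  simp only [map_sum, map_smul, smul_eq_mul]
  exact Finset.sum_neg' (fun u _ => mul_nonpos_of_nonneg_of_nonpos (hc u) (hS _ (hv u)).le)
    ⟨t, Finset.mem_univ _, mul_neg_of_pos_of_neg ((hc t).lt_of_ne' ht) (hS _ (hv t))⟩

theorem isConvexPreorder_of_forall_exists_sign {X : Set V} (ψ : V → ℝ)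
    (hψ : ∀ x ∈ X, ∃ H : V →ₗ[ℝ] ℝ, ∀ y ∈ X, SignType.sign (H y) = SignType.sign (ψ y - ψ x)) :
    IsConvexPreorder X (fun u v => ψ u ≤ ψ v) := by
  refine ⟨fun _ _ => le_rfl, fun _ _ _ _ _ _ => le_trans, fun _ _ _ _ => le_total _ _, ?_⟩
  intro x hx xm hxm xp hxp hspan
  obtain ⟨H, hH⟩ := hψ x hx
  have hbelow : ∀ y ∈ strictBelow (fun u v => ψ u ≤ ψ v) x X, H y < 0 := by
    rintro y ⟨hy, -, hxy⟩
    rw [← sign_eq_neg_one_iff, hH y hy, sign_neg (by linarith)]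
  have habove : ∀ y ∈ strictAbove (fun u v => ψ u ≤ ψ v) x X, (-H) y < 0 := by
    rintro y ⟨hy, -, hyx⟩
    rw [LinearMap.neg_apply, neg_lt_zero, ← sign_eq_one_iff, hH y hy, sign_pos (by linarith)]
  have hclass : Submodule.span ℝ (eqClass (fun u v => ψ u ≤ ψ v) x X) ≤ LinearMap.ker H := by
    rw [Submodule.span_le]
    rintro y ⟨hy, hxy, hyx⟩
    rw [SetLike.mem_coe, LinearMap.mem_ker, ← sign_eq_zero_iff, hH y hy,
      sub_eq_zero.mpr (le_antisymm hyx hxy), sign_zero]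
  have heq : H xm = H xp := sub_eq_zero.mp (by simpa using hclass hspan)
  have hm := fun h => apply_neg_of_mem_nnspan hbelow hxm h
  have hp := fun h => neg_lt_zero.mp (apply_neg_of_mem_nnspan habove hxp h)
  rcases eq_or_ne xm 0 with rfl | hm0
  · refine ⟨rfl, by_contra fun hp0 => (hp hp0).ne ?_⟩
    rw [← heq, map_zero]
  · exfalso
    rcases eq_or_ne xp 0 with rfl | hp0
    · exact (hm hm0).ne (by rw [heq, map_zero])
    · linarith [hm hm0, hp hp0]

variable {l : ℕ}

-- `β` is indexed from `0`, so `A p (β k)` changes sign between `p = k` and `p = k + 1`.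
structure HasSignChanges (X : Set V) (β : Fin l → V) (A : ℕ → V →ₗ[ℝ] ℝ) : Prop where
  pos : ∀ (k : Fin l) (p : ℕ), p ≤ k → 0 < A p (β k)
  neg : ∀ (k : Fin l) (p : ℕ), k < p → p ≤ l → A p (β k) < 0
  rest : ∀ x ∈ X, x ∉ range β → ∀ p ≤ l, 0 < A p x

open Classical in
noncomputable def crossingPosition (β : Fin l → V) (A : ℕ → V →ₗ[ℝ] ℝ) (x : V) : ℝ :=
  if h : ∃ k, β k = x then (h.choose : ℕ) else l + A l x / A 0 x

namespace HasSignChanges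

variable {X : Set V} {β : Fin l → V} {A : ℕ → V →ₗ[ℝ] ℝ}

theorem injective (h : HasSignChanges X β A) : Function.Injective β := by
  have key : ∀ k j : Fin l, k < j → β k ≠ β j := fun k j hlt hkj => by
    have := h.pos j (k + 1) hlt
    linarith [h.neg k (k + 1) (Nat.lt_succ_self k) ((Fin.lt_def.mp hlt).trans j.2), hkj ▸ this]
  intro k j hkj
  by_contra hne
  rcases lt_or_gt_of_ne hne with hlt | hlt
  exacts [key k j hlt hkj, key j k hlt hkj.symm]

theorem crossingPosition_apply (h : HasSignChanges X β A) (k : Fin l) :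
    crossingPosition β A (β k) = k := by
  have hk : ∃ j, β j = β k := ⟨k, rfl⟩
  rw [crossingPosition, dif_pos hk, h.injective hk.choose_spec]

theorem crossingPosition_of_notMem_range {x : V} (hx : x ∉ range β) :
    crossingPosition β A x = l + A l x / A 0 x :=
  dif_neg hx

theorem crossingPosition_lt (h : HasSignChanges X β A) (k : Fin l) :
    crossingPosition β A (β k) < l := by
  rw [h.crossingPosition_apply]
  exact_mod_cast k.2

theorem lt_crossingPosition (h : HasSignChanges X β A) {x : V} (hx : x ∈ X) (hxβ : x ∉ range β) :
    (l : ℝ) < crossingPosition β A x := by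
  rw [crossingPosition_of_notMem_range hxβ]
  have := div_pos (h.rest x hx hxβ l le_rfl) (h.rest x hx hxβ 0 (Nat.zero_le _))
  linarith

theorem sign_apply_eq_at_β (h : HasSignChanges X β A) (k : Fin l) {y : V} (hy : y ∈ X) :
    SignType.sign ((A k (β k) • A (k + 1) - A (k + 1) (β k) • A k) y) =
      SignType.sign (crossingPosition β A y - crossingPosition β A (β k)) := by
  have ha := h.pos k k le_rfl
  have hb := h.neg k (k + 1) (Nat.lt_succ_self k) k.2
  simp only [LinearMap.sub_apply, LinearMap.smul_apply, smul_eq_mul]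
  by_cases hyβ : y ∈ range β
  · obtain ⟨j, rfl⟩ := hyβ
    rw [h.crossingPosition_apply, h.crossingPosition_apply]
    rcases lt_trichotomy j k with hjk | rfl | hjk
    · have hj1 := h.neg j k hjk k.2.le
      have hj2 := h.neg j (k + 1) (by omega) k.2
      have : (j : ℝ) < k := by exact_mod_cast hjk
      rw [sign_neg (by nlinarith), sign_neg (by linarith)]
    · rw [mul_comm, sub_self, sub_self]
    · have hj1 := h.pos j k hjk.le
      have hj2 := h.pos j (k + 1) hjk
      have : (k : ℝ) < j := by exact_mod_cast hjk
      rw [sign_pos (by nlinarith), sign_pos (by linarith)]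
  · have hy1 := h.rest y hy hyβ k k.2.le
    have hy2 := h.rest y hy hyβ (k + 1) k.2
    rw [sign_pos (by nlinarith),
      sign_pos (by linarith [h.crossingPosition_lt k, h.lt_crossingPosition hy hyβ])]

theorem sign_apply_eq_at_notMem_range (h : HasSignChanges X β A) {x : V} (hx : x ∈ X)
    (hxβ : x ∉ range β) {y : V} (hy : y ∈ X) :
    SignType.sign ((A 0 x • A l - A l x • A 0) y) =
      SignType.sign (crossingPosition β A y - crossingPosition β A x) := by
  have hx0 := h.rest x hx hxβ 0 (Nat.zero_le _)
  have hxl := h.rest x hx hxβ l le_rfl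
  simp only [LinearMap.sub_apply, LinearMap.smul_apply, smul_eq_mul]
  by_cases hyβ : y ∈ range β
  · obtain ⟨j, rfl⟩ := hyβ
    have hj0 := h.pos j 0 (Nat.zero_le _)
    have hjl := h.neg j l j.2 le_rfl
    rw [sign_neg (by nlinarith),
      sign_neg (by linarith [h.crossingPosition_lt j, h.lt_crossingPosition hx hxβ])]
  · have hy0 := h.rest y hy hyβ 0 (Nat.zero_le _)
    have hdiff : A 0 x * A l y - A l x * A 0 y =
        (A 0 x * A 0 y) * (crossingPosition β A y - crossingPosition β A x) := by
      rw [crossingPosition_of_notMem_range hxβ, crossingPosition_of_notMem_range hyβ]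
      field_simp
      ring
    rw [hdiff, sign_mul, sign_pos (mul_pos hx0 hy0), one_mul]

theorem exists_convexPreorder (h : HasSignChanges X β A) :
    ∃ le : V → V → Prop, IsConvexPreorder X le ∧
      (∀ k j : Fin l, k < j → le (β k) (β j) ∧ ¬ le (β j) (β k)) ∧
      (∀ x ∈ X, x ∉ range β → ∀ k : Fin l, le (β k) x ∧ ¬ le x (β k)) := by
  refine ⟨fun u v => crossingPosition β A u ≤ crossingPosition β A v,
    isConvexPreorder_of_forall_exists_sign _ fun x hx => ?_, fun k j hkj => ?_,
    fun x hx hxβ k => ?_⟩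
  · by_cases hxβ : x ∈ range β
    · obtain ⟨k, rfl⟩ := hxβ
      exact ⟨_, fun y hy => h.sign_apply_eq_at_β k hy⟩
    · exact ⟨_, fun y hy => h.sign_apply_eq_at_notMem_range hx hxβ hy⟩
  · have : crossingPosition β A (β k) < crossingPosition β A (β j) := by
      rw [h.crossingPosition_apply, h.crossingPosition_apply]
      exact_mod_cast hkj
    exact ⟨this.le, not_le.mpr this⟩
  · have := (h.crossingPosition_lt k).trans (h.lt_crossingPosition hx hxβ)
    exact ⟨this.le, not_le.mpr this⟩

end HasSignChanges

end ConvexPreorder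

namespace KacMoodyData

open scoped Pointwise

variable {I V : Type*} [AddCommGroup V] [Module ℝ V] {D : KacMoodyData I V}

/-! ### Roots and heights -/

def listProd (D : KacMoodyData I V) (L : List I) : V ≃ₗ[ℝ] V := (L.map D.s).prod

@[simp] theorem listProd_nil : D.listProd [] = 1 := rfl

@[simp] theorem listProd_cons (a : I) (L : List I) :
    D.listProd (a :: L) = D.s a * D.listProd L := by
  simp [listProd]

@[simp] theorem listProd_append (L L' : List I) :
    D.listProd (L ++ L') = D.listProd L * D.listProd L' := by
  simp [listProd]

theorem wordProd_eq_listProd {l : ℕ} (f : Fin l → I) :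
    D.wordProd f = D.listProd (List.ofFn f) := by
  simp [wordProd, listProd, List.map_ofFn, Function.comp_def]

@[simp] theorem s_s (i : I) (x : V) : D.s i (D.s i x) = x := by
  simp only [D.s_apply, map_sub, map_smul, D.coroot_self, smul_eq_mul]
  module

@[simp] theorem s_mul_s (i : I) : D.s i * D.s i = 1 :=
  LinearEquiv.ext (s_s i)

@[simp] theorem s_symm (i : I) : (D.s i).symm = D.s i :=
  LinearEquiv.ext fun x => (D.s i).symm_apply_eq.mpr (s_s i x).symm

@[simp] theorem s_α (i : I) : D.s i (D.α i) = -D.α i := by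
  rw [D.s_apply, D.coroot_self, two_smul]; abel

def roots (D : KacMoodyData I V) : Set V := D.posRoots ∪ -D.posRoots

noncomputable def rootBasis (D : KacMoodyData I V) :
    Module.Basis (D.indep.linearIndepOn_id.extend (subset_univ (range D.α))) ℝ V :=
  Module.Basis.extend D.indep.linearIndepOn_id

def rootIndex (D : KacMoodyData I V) (i : I) :
    D.indep.linearIndepOn_id.extend (subset_univ (range D.α)) :=
  ⟨D.α i, Module.Basis.subset_extend _ (mem_range_self i)⟩

noncomputable def coord (D : KacMoodyData I V) (i : I) : V →ₗ[ℝ] ℝ :=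
  D.rootBasis.coord (D.rootIndex i)

noncomputable def ht (D : KacMoodyData I V) : V →ₗ[ℝ] ℝ := D.rootBasis.sumCoords

theorem rootBasis_rootIndex (i : I) : D.rootBasis (D.rootIndex i) = D.α i :=
  Module.Basis.extend_apply_self _ _

@[simp] theorem coord_α_self (i : I) : D.coord i (D.α i) = 1 := by
  rw [coord, ← rootBasis_rootIndex, Module.Basis.coord_apply, Module.Basis.repr_self,
    Finsupp.single_eq_same]

theorem coord_α_of_ne {i j : I} (h : i ≠ j) : D.coord i (D.α j) = 0 := by
  rw [coord, ← rootBasis_rootIndex, Module.Basis.coord_apply, Module.Basis.repr_self,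
    Finsupp.single_eq_of_ne]
  exact fun h' => h (D.indep.injective (congrArg Subtype.val h'))

theorem ht_α (i : I) : D.ht (D.α i) = 1 := by
  rw [ht, ← rootBasis_rootIndex, Module.Basis.sumCoords_self_apply]

theorem coord_emb (i : I) (c : I →₀ ℕ) : D.coord i (D.emb c) = c i := by
  rw [emb, map_finsuppSum, Finsupp.sum_eq_single i]
  · simp
  · intro j _ hji
    simp [coord_α_of_ne (Ne.symm hji)]
  · simp

theorem ht_emb (c : I →₀ ℕ) : D.ht (D.emb c) = c.sum fun _ n => (n : ℝ) := by
  simp [emb, map_finsuppSum, ht_α]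

theorem one_le_ht {γ : V} (hγ : γ ∈ D.posRoots) : 1 ≤ D.ht γ := by
  obtain ⟨c, hc, hγc⟩ := D.pos_ht γ hγ
  obtain ⟨i, hi⟩ := Finsupp.ne_iff.mp hc
  rw [show γ = D.emb c from hγc, ht_emb, Finsupp.sum]
  calc (1 : ℝ) ≤ c i := by exact_mod_cast Nat.one_le_iff_ne_zero.mpr hi
    _ ≤ _ := Finset.single_le_sum (fun j _ => Nat.cast_nonneg (c j))
        (Finsupp.mem_support_iff.mpr hi)

theorem ht_le_neg_one {γ : V} (hγ : γ ∈ -D.posRoots) : D.ht γ ≤ -1 := by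
  have := one_le_ht hγ
  rw [map_neg] at this
  linarith

theorem exists_coord_eq_natCast {γ : V} (hγ : γ ∈ D.posRoots) (i : I) :
    ∃ n : ℕ, D.coord i γ = n := by
  obtain ⟨c, -, hγc⟩ := D.pos_ht γ hγ
  exact ⟨c i, by rw [show γ = D.emb c from hγc, coord_emb]⟩

theorem coord_nonneg {γ : V} (hγ : γ ∈ D.posRoots) (i : I) : 0 ≤ D.coord i γ := by
  obtain ⟨n, hn⟩ := exists_coord_eq_natCast hγ i
  exact hn ▸ n.cast_nonneg

theorem neg_notMem_posRoots {γ : V} (hγ : γ ∈ D.posRoots) : γ ∉ -D.posRoots := fun h => by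
  linarith [one_le_ht hγ, ht_le_neg_one h]

theorem mem_posRoots_of_ht_nonneg {γ : V} (hγ : γ ∈ D.roots) (h : 0 ≤ D.ht γ) :
    γ ∈ D.posRoots :=
  hγ.resolve_right fun h' => by linarith [ht_le_neg_one h']

theorem s_mem_roots (i : I) {γ : V} (hγ : γ ∈ D.roots) : D.s i γ ∈ D.roots := by
  rcases hγ with hγ | hγ
  · rcases eq_or_ne γ (D.α i) with rfl | hne
    · right; simpa using D.simple_mem i
    · exact Or.inl (D.s_perm i γ hγ hne)
  · rcases eq_or_ne (-γ) (D.α i) with h | hne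
    · left; simpa [neg_eq_iff_eq_neg.mp h] using D.simple_mem i
    · right; simpa using D.s_perm i _ hγ hne

theorem listProd_mem_roots (L : List I) {γ : V} (hγ : γ ∈ D.roots) :
    D.listProd L γ ∈ D.roots := by
  induction L with
  | nil => exact hγ
  | cons a L ih => exact s_mem_roots a ih

theorem symm_listProd_mem_roots (L : List I) {γ : V} (hγ : γ ∈ D.roots) :
    (D.listProd L).symm γ ∈ D.roots := by
  induction L generalizing γ with
  | nil => exact hγ
  | cons a L ih => exact ih (by simpa using s_mem_roots a hγ)

theorem exists_coroot_α_eq_neg_natCast {a b : I} (hab : a ≠ b) :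
    ∃ n : ℕ, D.coroot a (D.α b) = -n := by
  obtain ⟨n, hn⟩ := exists_coord_eq_natCast
    (D.s_perm a _ (D.simple_mem b) (fun h => hab (D.indep.injective h).symm)) a
  refine ⟨n, ?_⟩
  simp [D.s_apply, coord_α_of_ne hab] at hn
  linarith

theorem coroot_α_eq_zero_comm {a b : I} (hab : a ≠ b) (h : D.coroot a (D.α b) = 0) :
    D.coroot b (D.α a) = 0 := by
  obtain ⟨m, hm⟩ := exists_coroot_α_eq_neg_natCast (D := D) (Ne.symm hab)
  rcases Nat.eq_zero_or_pos m with hm0 | hm0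
  · simp [hm, hm0]
  set δ := D.s b (D.α a)
  have hδ : δ = D.α a + (m : ℝ) • D.α b := by simp only [δ, D.s_apply, hm]; module
  have hne : δ ≠ D.α a := fun h' => by
    have := congrArg (D.coord b) (hδ.symm.trans h')
    simp [coord_α_of_ne (Ne.symm hab)] at this
    omega
  have hsδ : D.s a δ = -D.α a + (m : ℝ) • D.α b := by
    rw [D.s_apply, hδ]; simp [D.coroot_self, h]; module
  have := coord_nonneg (D.s_perm a δ
    (D.s_perm b _ (D.simple_mem a) (fun h => hab (D.indep.injective h))) hne) a
  simp [hsδ, coord_α_of_ne hab] at this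
  linarith

/-! ### Inversion sets and the parity of lengths -/

def inversionSet (D : KacMoodyData I V) (u : V ≃ₗ[ℝ] V) : Set V :=
  {γ ∈ D.posRoots | u.symm γ ∈ -D.posRoots}

def rootSeq (D : KacMoodyData I V) : List I → List V
  | [] => []
  | a :: L => D.α a :: (D.rootSeq L).map (D.s a)

@[simp] theorem length_rootSeq (L : List I) : (D.rootSeq L).length = L.length := by
  induction L with
  | nil => rfl
  | cons a L ih => simp [rootSeq, ih]

theorem rootSeq_append_singleton (L : List I) (t : I) :
    D.rootSeq (L ++ [t]) = D.rootSeq L ++ [D.listProd L (D.α t)] := by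
  induction L with
  | nil => rfl
  | cons a L ih => simp [rootSeq, ih]

theorem rootSeq_take (L : List I) (p : ℕ) : D.rootSeq (L.take p) = (D.rootSeq L).take p := by
  induction L generalizing p with
  | nil => simp [rootSeq]
  | cons a L ih => cases p <;> simp [rootSeq, ih, List.map_take]

theorem getElem_rootSeq (L : List I) (k : ℕ) (hk : k < (D.rootSeq L).length) :
    (D.rootSeq L)[k] = D.listProd (L.take k) (D.α (L[k]'(by simpa using hk))) := by
  induction L generalizing k with
  | nil => simp at hk
  | cons a L ih => cases k <;> simp [rootSeq, ih]

theorem s_mem_neg_posRoots_iff (t : I) {δ : V} (hδ : δ ∈ D.roots) :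
    D.s t δ ∈ -D.posRoots ↔ (δ ∈ -D.posRoots ∧ δ ≠ -D.α t) ∨ δ = D.α t := by
  constructor
  · intro h
    rcases hδ with hδ | hδ
    · by_cases hδt : δ = D.α t
      · exact Or.inr hδt
      · exact absurd h (neg_notMem_posRoots (D.s_perm t δ hδ hδt))
    · refine Or.inl ⟨hδ, fun hδt => ?_⟩
      rw [hδt, map_neg, s_α, neg_neg] at h
      exact neg_notMem_posRoots (D.simple_mem t) h
  · rintro (⟨hδ, hδt⟩ | rfl)
    · rw [Set.mem_neg, ← map_neg]
      exact D.s_perm t _ hδ (fun h => hδt (neg_eq_iff_eq_neg.mp h))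
    · simpa using D.simple_mem t

theorem inversionSet_listProd_append_singleton (L : List I) (t : I) :
    D.inversionSet (D.listProd (L ++ [t])) =
      (D.inversionSet (D.listProd L) \ {-D.listProd L (D.α t)}) ∪
        ({D.listProd L (D.α t)} ∩ D.posRoots) := by
  ext γ
  set u := D.listProd L
  have hγ : γ = u (u.symm γ) := (u.apply_symm_apply γ).symm
  have hsymm : (D.listProd (L ++ [t])).symm γ = D.s t (u.symm γ) := by
    calc _ = (D.s t).symm (u.symm γ) := by
          rw [listProd_append, listProd_cons, listProd_nil, mul_one]; rfl
      _ = _ := by rw [s_symm]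
  simp only [inversionSet, Set.mem_ofPred_eq, Set.mem_union, Set.mem_sdiff, Set.mem_inter_iff,
    Set.mem_singleton_iff, hsymm]
  constructor
  · rintro ⟨hpos, h⟩
    rcases (s_mem_neg_posRoots_iff t (symm_listProd_mem_roots L (Or.inl hpos))).mp h with
      ⟨hneg, hne⟩ | heq
    · exact Or.inl ⟨⟨hpos, hneg⟩,
        fun h' => hne (by rw [h', map_neg, LinearEquiv.symm_apply_apply])⟩
    · exact Or.inr ⟨by rw [hγ, heq], hpos⟩
  · rintro (⟨⟨hpos, hneg⟩, hne⟩ | ⟨rfl, hpos⟩)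
    · refine ⟨hpos, (s_mem_neg_posRoots_iff t (Or.inr hneg)).mpr (Or.inl ⟨hneg, fun h' => ?_⟩)⟩
      exact hne (by rw [hγ, h', map_neg])
    · exact ⟨hpos, by simpa using D.simple_mem t⟩

theorem inversionSet_listProd_append_singleton_of_pos {L : List I} {t : I}
    (h : D.listProd L (D.α t) ∈ D.posRoots) :
    D.inversionSet (D.listProd (L ++ [t])) =
      insert (D.listProd L (D.α t)) (D.inversionSet (D.listProd L)) ∧
    D.listProd L (D.α t) ∉ D.inversionSet (D.listProd L) := by
  refine ⟨?_, fun h' => neg_notMem_posRoots (D.simple_mem t) (by simpa using h'.2)⟩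
  rw [inversionSet_listProd_append_singleton, Set.inter_eq_left.mpr (by simpa using h),
    Set.sdiff_singleton_eq_self (fun h' => neg_notMem_posRoots h (by simpa using h'.1)),
    Set.union_singleton]

theorem inversionSet_listProd_append_singleton_of_neg {L : List I} {t : I}
    (h : D.listProd L (D.α t) ∈ -D.posRoots) :
    D.inversionSet (D.listProd (L ++ [t])) =
      D.inversionSet (D.listProd L) \ {-D.listProd L (D.α t)} ∧
    -D.listProd L (D.α t) ∈ D.inversionSet (D.listProd L) := by
  refine ⟨?_, h, by simpa using D.simple_mem t⟩
  rw [inversionSet_listProd_append_singleton, Set.singleton_inter_eq_empty.mpr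
    (neg_notMem_posRoots · (by simpa using h)), Set.union_empty]

theorem inversionSet_listProd_subset (L : List I) :
    D.inversionSet (D.listProd L) ⊆ {γ | γ ∈ D.rootSeq L} := by
  induction L using List.reverseRecOn with
  | nil => exact fun γ hγ => (neg_notMem_posRoots hγ.1 hγ.2).elim
  | append_singleton L t ih =>
    rw [inversionSet_listProd_append_singleton, rootSeq_append_singleton]
    rintro γ (⟨hγ, -⟩ | ⟨rfl, -⟩)
    · exact List.mem_append_left _ (ih hγ)
    · exact List.mem_append_right _ (List.mem_singleton_self _)

theorem even_length_add_ncard_inversionSet (L : List I) :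
    Even (L.length + (D.inversionSet (D.listProd L)).ncard) := by
  induction L using List.reverseRecOn with
  | nil =>
    have : D.inversionSet (D.listProd []) = ∅ :=
      Set.eq_empty_of_forall_notMem fun γ hγ => neg_notMem_posRoots hγ.1 hγ.2
    rw [List.length_nil, this, Set.ncard_empty]
    exact Even.zero
  | append_singleton L t ih =>
    have hfin := (List.finite_toSet (D.rootSeq L)).subset (inversionSet_listProd_subset L)
    rw [List.length_append, List.length_singleton]
    rcases listProd_mem_roots L (Or.inl (D.simple_mem t)) with h | h
    · obtain ⟨heq, hnotMem⟩ := inversionSet_listProd_append_singleton_of_pos h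
      rw [heq, Set.ncard_insert_of_notMem hnotMem hfin]
      grind
    · obtain ⟨heq, hmem⟩ := inversionSet_listProd_append_singleton_of_neg h
      have := Set.ncard_sdiff_singleton_add_one hmem hfin
      rw [heq]
      grind

theorem even_length_add_length_of_listProd_eq {L L' : List I}
    (h : D.listProd L = D.listProd L') : Even (L.length + L'.length) := by
  have h₁ := even_length_add_ncard_inversionSet (D := D) L
  have h₂ := even_length_add_ncard_inversionSet (D := D) L'
  rw [h] at h₁
  grind

/-- Equivalent to `D.len (D.listProd L) = L.length`. -/
def IsReduced (D : KacMoodyData I V) (L : List I) : Prop :=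
  ∀ L' : List I, D.listProd L' = D.listProd L → L.length ≤ L'.length

theorem isReduced_ofFn {l : ℕ} {f : Fin l → I} (h : D.len (D.wordProd f) = l) :
    D.IsReduced (List.ofFn f) := by
  intro L hL
  rw [List.length_ofFn, ← h]
  refine Nat.sInf_le ⟨L.get, ?_⟩
  rw [wordProd_eq_listProd, wordProd_eq_listProd, List.ofFn_get, hL]

theorem exists_isReduced (L : List I) :
    ∃ R, D.IsReduced R ∧ D.listProd R = D.listProd L := by
  induction h : L.length using Nat.strong_induction_on generalizing L with
  | _ n ih =>
    by_cases hL : D.IsReduced L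
    · exact ⟨L, hL, rfl⟩
    · simp only [IsReduced, not_forall, not_le] at hL
      obtain ⟨L', hL', hlt⟩ := hL
      obtain ⟨R, hR, hRL⟩ := ih _ (h ▸ hlt) L' rfl
      exact ⟨R, hR, hRL.trans hL'⟩

theorem IsReduced.of_listProd_eq {L L' : List I} (h : D.IsReduced L)
    (he : D.listProd L' = D.listProd L) (hl : L'.length = L.length) : D.IsReduced L' :=
  fun L'' hL'' => hl ▸ h L'' (hL''.trans he)

theorem IsReduced.of_append_left {L₁ L₂ : List I} (h : D.IsReduced (L₁ ++ L₂)) :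
    D.IsReduced L₁ := fun L' hL' => by
  have := h (L' ++ L₂) (by rw [listProd_append, listProd_append, hL'])
  simp only [List.length_append] at this
  omega

theorem IsReduced.append_singleton_or {L : List I} (hL : D.IsReduced L) (t : I) :
    D.IsReduced (L ++ [t]) ∨
      ∃ R : List I, R.length + 1 = L.length ∧ D.listProd (R ++ [t]) = D.listProd L := by
  obtain ⟨R, hR, hRL⟩ := exists_isReduced (D := D) (L ++ [t])
  have hRt : D.listProd (R ++ [t]) = D.listProd L := by
    rw [listProd_append, hRL]
    simp [mul_assoc]
  have h₁ := hL _ hRt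
  have h₂ := hR _ hRL.symm
  obtain ⟨k, hk⟩ := even_length_add_length_of_listProd_eq hRL
  simp only [List.length_append, List.length_singleton] at h₁ h₂ hk
  rcases (by omega : R.length = L.length + 1 ∨ R.length + 1 = L.length) with h | h
  · exact Or.inl (hR.of_listProd_eq hRL.symm (by simp [h]))
  · exact Or.inr ⟨R, h, hRt⟩

/-! ### Rank two -/

def alternatingWord (a b : I) : ℕ → List I
  | 0 => []
  | r + 1 => a :: alternatingWord b a r

@[simp] theorem length_alternatingWord (a b : I) (r : ℕ) :
    (alternatingWord a b r).length = r := by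
  induction r generalizing a b with
  | zero => rfl
  | succ r ih => simp [alternatingWord, ih]

/-- The order of `s_a s_b` when `⟨α_a^∨, α_b⟩ ⟨α_b^∨, α_a⟩ = n ≤ 3`. -/
def dihedralOrder : ℕ → ℕ
  | 0 => 2
  | 1 => 3
  | 2 => 4
  | _ => 6

def dihedralCoeff (n n' : ℕ) : ℕ → ℤ × ℤ
  | 0 => (1, 0)
  | r + 1 => (n * (dihedralCoeff n' n r).1 - (dihedralCoeff n' n r).2, (dihedralCoeff n' n r).1)

theorem listProd_alternatingWord_apply_α {a b : I} {n n' : ℕ}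
    (hn : D.coroot a (D.α b) = -n) (hn' : D.coroot b (D.α a) = -n') {r : ℕ} {c : I}
    (hc : alternatingWord a b (r + 1) = alternatingWord a b r ++ [c]) :
    D.listProd (alternatingWord a b r) (D.α c) =
      ((dihedralCoeff n n' r).1 : ℝ) • D.α a + ((dihedralCoeff n n' r).2 : ℝ) • D.α b := by
  induction r generalizing a b n n' with
  | zero =>
    obtain rfl : a = c := (List.cons.inj hc).1
    simp [alternatingWord, dihedralCoeff]
  | succ r ih =>
    have hc' : alternatingWord b a (r + 1) = alternatingWord b a r ++ [c] := (List.cons.inj hc).2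
    show D.listProd (a :: alternatingWord b a r) (D.α c) = _
    rw [listProd_cons, LinearEquiv.mul_apply, ih hn' hn hc', dihedralCoeff]
    simp only [map_add, map_smul, D.s_apply, hn, D.coroot_self]
    push_cast
    module

theorem dihedralCoeff_nonneg_of_four_le {n n' : ℕ} (h : 4 ≤ n * n') (r : ℕ) :
    0 ≤ (dihedralCoeff n n' r).1 ∧ 0 ≤ (dihedralCoeff n n' r).2 ∧
      n * (dihedralCoeff n n' r).2 ≤ 2 * (dihedralCoeff n n' r).1 := by
  induction r generalizing n n' with
  | zero => simp [dihedralCoeff]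
  | succ r ih =>
    obtain ⟨hA, hB, hAB⟩ := ih (n := n') (n' := n) (by rwa [mul_comm])
    have h' : (4 : ℤ) ≤ n * n' := by exact_mod_cast h
    simp only [dihedralCoeff]
    exact ⟨by nlinarith, hA, by nlinarith⟩

theorem dihedralCoeff_nonneg {n n' r : ℕ} (h : 4 ≤ n * n' ∨ r < dihedralOrder (n * n')) :
    0 ≤ (dihedralCoeff n n' r).1 ∧ 0 ≤ (dihedralCoeff n n' r).2 := by
  by_cases h4 : 4 ≤ n * n'
  · exact (dihedralCoeff_nonneg_of_four_le h4 r).imp_right And.left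
  replace h : r < dihedralOrder (n * n') := h.resolve_left h4
  rcases r with _ | _ | r
  · simp [dihedralCoeff]
  · simp [dihedralCoeff]
  have h0 : n * n' ≠ 0 := fun h0 => by simp [h0, dihedralOrder] at h
  have hn : n ≤ 3 := by nlinarith [Nat.pos_of_ne_zero (right_ne_zero_of_mul h0)]
  have hn' : n' ≤ 3 := by nlinarith [Nat.pos_of_ne_zero (left_ne_zero_of_mul h0)]
  have hr : r < 4 := by
    have : dihedralOrder (n * n') ≤ 6 := by unfold dihedralOrder; split <;> omega
    omega
  interval_cases n <;> interval_cases n' <;> interval_cases r <;> revert h <;> decide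

theorem listProd_alternatingWord_dihedralOrder {a b : I} (hab : a ≠ b) {n n' : ℕ}
    (hn : D.coroot a (D.α b) = -n) (hn' : D.coroot b (D.α a) = -n') (h : n * n' ≤ 3) :
    D.listProd (alternatingWord a b (dihedralOrder (n * n'))) =
      D.listProd (alternatingWord b a (dihedralOrder (n * n'))) := by
  by_cases h0 : n * n' = 0
  · have hn0 : D.coroot a (D.α b) = 0 ∧ D.coroot b (D.α a) = 0 := by
      rcases Nat.mul_eq_zero.mp h0 with h0 | h0
      · exact ⟨by simp [hn, h0], coroot_α_eq_zero_comm hab (by simp [hn, h0])⟩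
      · exact ⟨coroot_α_eq_zero_comm (Ne.symm hab) (by simp [hn', h0]), by simp [hn', h0]⟩
    rw [h0]
    ext x
    simp [alternatingWord, dihedralOrder, D.s_apply, hn0]
    module
  have hn3 : n ≤ 3 := by nlinarith [Nat.pos_of_ne_zero (right_ne_zero_of_mul h0)]
  have hn3' : n' ≤ 3 := by nlinarith [Nat.pos_of_ne_zero (left_ne_zero_of_mul h0)]
  interval_cases n <;> interval_cases n' <;> simp at h0 h ⊢ <;>
  · ext x
    simp [alternatingWord, dihedralOrder, D.s_apply, hn, hn', D.coroot_self]
    module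

/-! ### Tits' lemma -/

theorem listProd_apply_mem_posRoots_of_nonneg {L : List I} {a b : I}
    (ha : D.listProd L (D.α a) ∈ D.posRoots) (hb : D.listProd L (D.α b) ∈ D.posRoots)
    {A B : ℝ} (hA : 0 ≤ A) (hB : 0 ≤ B) (hroot : A • D.α a + B • D.α b ∈ D.roots) :
    D.listProd L (A • D.α a + B • D.α b) ∈ D.posRoots := by
  refine mem_posRoots_of_ht_nonneg (listProd_mem_roots L hroot) ?_
  rw [map_add, map_smul, map_smul, map_add, map_smul, map_smul, smul_eq_mul, smul_eq_mul]
  nlinarith [one_le_ht ha, one_le_ht hb]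

/-- The inductive step of Tits' lemma: `L` and `alternatingWord a b r` are the `v` and `w` of the
sketch at the top. -/
theorem listProd_append_alternatingWord_apply_mem_posRoots {M : ℕ}
    (ih : ∀ (L : List I) (p : I), L.length < M → D.IsReduced (L ++ [p]) →
      D.listProd L (D.α p) ∈ D.posRoots)
    {a b c : I} (hab : a ≠ b) {n n' : ℕ}
    (hn : D.coroot a (D.α b) = -n) (hn' : D.coroot b (D.α a) = -n') {r : ℕ} (hr : 1 ≤ r)
    (hc : alternatingWord a b (r + 1) = alternatingWord a b r ++ [c])
    (hfin : 4 ≤ n * n' ∨ r < dihedralOrder (n * n'))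
    {L : List I} (hM : L.length + r = M)
    (hred : D.IsReduced (L ++ alternatingWord a b r ++ [c])) :
    D.listProd (L ++ alternatingWord a b r) (D.α c) ∈ D.posRoots := by
  induction h : L.length using Nat.strong_induction_on generalizing L a b n n' r with
  | _ j ihj =>
  rcases hred.of_append_left.of_append_left.append_singleton_or b with hb | ⟨R, hRL, hR⟩
  · obtain ⟨r, rfl⟩ : ∃ r', r = r' + 1 := ⟨r - 1, by omega⟩
    have ha : D.IsReduced (L ++ [a]) := by
      have : L ++ alternatingWord a b (r + 1) ++ [c] =
          L ++ [a] ++ (alternatingWord b a r ++ [c]) := by simp [alternatingWord]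
      exact (this ▸ hred).of_append_left
    obtain ⟨hA, hB⟩ := dihedralCoeff_nonneg hfin
    have hα := listProd_alternatingWord_apply_α hn hn' hc
    rw [listProd_append, LinearEquiv.mul_apply, hα]
    refine listProd_apply_mem_posRoots_of_nonneg (ih L a (by omega) ha) (ih L b (by omega) hb)
      (by exact_mod_cast hA) (by exact_mod_cast hB) ?_
    exact hα ▸ listProd_mem_roots _ (Or.inl (D.simple_mem c))
  · have hprod : D.listProd (L ++ alternatingWord a b r) =
        D.listProd (R ++ alternatingWord b a (r + 1)) := by
      simp [← hR, alternatingWord, mul_assoc]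
    by_cases hbraid : n * n' ≤ 3 ∧ r + 1 = dihedralOrder (n * n')
    · have hbr := listProd_alternatingWord_dihedralOrder hab hn hn' hbraid.1
      rw [← hbraid.2, hc] at hbr
      have := hred (R ++ alternatingWord a b r) (by
        rw [listProd_append (L ++ _), hprod, listProd_append R (alternatingWord b a _), ← hbr]
        simp [mul_assoc])
      simp only [List.length_append, List.length_singleton, length_alternatingWord] at this
      omega
    · have hc' : alternatingWord b a (r + 1 + 1) = alternatingWord b a (r + 1) ++ [c] :=
        congrArg (b :: ·) hc
      rw [hprod]
      refine ihj R.length (by omega) (Ne.symm hab) hn' hn (by omega) hc'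
        (by rw [mul_comm]; omega) (by omega) ?_ rfl
      refine hred.of_listProd_eq ?_ (by simp; omega)
      rw [listProd_append _ [c], listProd_append _ [c], hprod]

theorem IsReduced.listProd_apply_α_mem_posRoots {L : List I} {p : I}
    (h : D.IsReduced (L ++ [p])) : D.listProd L (D.α p) ∈ D.posRoots := by
  induction hM : L.length using Nat.strong_induction_on generalizing L p with
  | _ M ih =>
  rcases L.eq_nil_or_concat with rfl | ⟨L, t, rfl⟩
  · exact D.simple_mem p
  rw [List.concat_eq_append] at h hM ⊢
  obtain rfl | htp := eq_or_ne t p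
  · have := h L (by simp)
    simp at this
  obtain ⟨n, hn⟩ := exists_coroot_α_eq_neg_natCast (D := D) htp
  obtain ⟨n', hn'⟩ := exists_coroot_α_eq_neg_natCast (D := D) (Ne.symm htp)
  have hfin : 1 < dihedralOrder (n * n') := by unfold dihedralOrder; split <;> omega
  exact listProd_append_alternatingWord_apply_mem_posRoots (fun L q hL hred => ih _ hL hred rfl)
    htp hn hn' le_rfl rfl (Or.inr hfin) (by simpa using hM) h

/-! ### Reduced words -/

theorem IsReduced.inversionSet_listProd {L : List I} (hL : D.IsReduced L) :
    D.inversionSet (D.listProd L) = {γ | γ ∈ D.rootSeq L} ∧ (D.rootSeq L).Nodup := by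
  induction L using List.reverseRecOn with
  | nil =>
    exact ⟨(inversionSet_listProd_subset []).antisymm (by simp [rootSeq]), List.nodup_nil⟩
  | append_singleton L t ih =>
    obtain ⟨ih, hnodup⟩ := ih hL.of_append_left
    obtain ⟨heq, hnotMem⟩ :=
      inversionSet_listProd_append_singleton_of_pos hL.listProd_apply_α_mem_posRoots
    rw [ih] at hnotMem
    rw [heq, ih, rootSeq_append_singleton]
    refine ⟨?_, List.nodup_append.mpr ⟨hnodup, List.nodup_singleton _, ?_⟩⟩
    · ext γ
      simp [or_comm]
    · rintro γ hγ _ hb rfl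
      exact hnotMem (List.mem_singleton.mp hb ▸ hγ)

theorem IsReduced.getElem_rootSeq_mem_posRoots {L : List I} (hL : D.IsReduced L) {k : ℕ}
    (hk : k < (D.rootSeq L).length) : (D.rootSeq L)[k] ∈ D.posRoots := by
  have : (D.rootSeq L)[k] ∈ D.inversionSet (D.listProd L) := by
    rw [hL.inversionSet_listProd.1]
    exact List.getElem_mem hk
  exact this.1

theorem IsReduced.symm_listProd_take_apply_mem_neg_iff {L : List I} (hL : D.IsReduced L)
    (p : ℕ) {k : ℕ} (hk : k < (D.rootSeq L).length) :
    (D.listProd (L.take p)).symm (D.rootSeq L)[k] ∈ -D.posRoots ↔ k < p := by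
  have htake : D.IsReduced (L.take p) :=
    (by rwa [List.take_append_drop] : D.IsReduced (L.take p ++ L.drop p)).of_append_left
  calc _ ↔ (D.rootSeq L)[k] ∈ D.inversionSet (D.listProd (L.take p)) :=
        ⟨fun h => ⟨hL.getElem_rootSeq_mem_posRoots hk, h⟩, fun h => h.2⟩
    _ ↔ (D.rootSeq L)[k] ∈ (D.rootSeq L).take p := by
        rw [htake.inversionSet_listProd.1, rootSeq_take]; rfl
    _ ↔ k < p := hL.inversionSet_listProd.2.getElem_mem_take_iff hk p

theorem IsReduced.hasSignChanges {L : List I} (hL : D.IsReduced L) {l : ℕ} (hl : L.length = l)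
    {β : Fin l → V}
    (hβ : ∀ k : Fin l, β k = D.listProd (L.take k) (D.α (L[(k : ℕ)]'(hl ▸ k.2)))) :
    HasSignChanges D.posRoots β fun p => D.ht ∘ₗ (D.listProd (L.take p)).symm.toLinearMap := by
  have hk : ∀ k : Fin l, (k : ℕ) < (D.rootSeq L).length := fun k => by simp [hl]
  have hβL : ∀ k : Fin l, β k = (D.rootSeq L)[(k : ℕ)]'(hk k) := fun k => by
    rw [hβ, getElem_rootSeq]
  refine ⟨fun k p hpk => ?_, fun k p hkp _ => ?_, fun x hx hxβ p _ => ?_⟩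
  · show 0 < D.ht ((D.listProd (L.take p)).symm (β k))
    rw [hβL]
    refine one_pos.trans_le (one_le_ht ((symm_listProd_mem_roots _
      (Or.inl (hL.getElem_rootSeq_mem_posRoots (hk k)))).resolve_right fun h => ?_))
    exact absurd ((hL.symm_listProd_take_apply_mem_neg_iff p (hk k)).mp h) (not_lt.mpr hpk)
  · show D.ht ((D.listProd (L.take p)).symm (β k)) < 0
    rw [hβL]
    exact (ht_le_neg_one ((hL.symm_listProd_take_apply_mem_neg_iff p (hk k)).mpr hkp)).trans_lt
      (by norm_num)
  · show 0 < D.ht ((D.listProd (L.take p)).symm x)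
    refine one_pos.trans_le (one_le_ht ((symm_listProd_mem_roots _ (Or.inl hx)).resolve_right
      fun h => hxβ ?_))
    have := inversionSet_listProd_subset (L.take p) ⟨hx, h⟩
    rw [Set.mem_ofPred_eq, rootSeq_take] at this
    obtain ⟨j, hj, rfl⟩ := List.getElem_of_mem (List.mem_of_mem_take this)
    exact ⟨⟨j, by simpa [hl] using hj⟩, hβL _⟩

end KacMoodyData

/-- Let `w = s_{i₁} ⋯ s_{i_l}` be a reduced expression of an element
`w` of the Weyl group, and `β_k = s_{i₁} ⋯ s_{i_{k-1}}(α_{i_k})`. Then there is a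
convex preorder `⪯` on the set of positive roots such that
`β₁ ≺ β₂ ≺ ⋯ ≺ β_l ≺ γ` for every `γ ∈ Δ₊ ∩ wΔ₊`. -/
theorem exists_convexPreorder_of_reduced_word
    {I : Type*} {V : Type*} [AddCommGroup V] [Module ℝ V]
    (D : KacMoodyData I V)
    (l : ℕ) (i : Fin l → I) (w : V ≃ₗ[ℝ] V)
    (hw : w = D.wordProd i) (hred : D.len w = l)
    (β : Fin l → V)
    (hβ : ∀ k : Fin l,
      β k = D.wordProd (fun j : Fin (k : ℕ) => i (Fin.castLE k.2.le j)) (D.α (i k))) :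
    ∃ le : V → V → Prop,
      IsConvexPreorder D.posRoots le ∧
      (∀ k j : Fin l, k < j → le (β k) (β j) ∧ ¬ le (β j) (β k)) ∧
      (∀ γ ∈ D.posRoots, w.symm γ ∈ D.posRoots →
        ∀ k : Fin l, le (β k) γ ∧ ¬ le γ (β k)) := by
  set L := List.ofFn i
  have hL : D.IsReduced L := KacMoodyData.isReduced_ofFn (hw ▸ hred)
  have hlen : L.length = l := List.length_ofFn
  have hβL : ∀ k : Fin l, β k = D.listProd (L.take k) (D.α (L[(k : ℕ)]'(by simp [L]))) := by
    intro k
    have htake : List.ofFn (fun j : Fin k => i (Fin.castLE k.2.le j)) = L.take k := by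
      apply List.ext_getElem <;> simp [L]
    rw [hβ k, KacMoodyData.wordProd_eq_listProd, htake, List.getElem_ofFn]
  have hsign := hL.hasSignChanges hlen hβL
  obtain ⟨le, hconv, hβlt, hrest⟩ := hsign.exists_convexPreorder
  refine ⟨le, hconv, hβlt, fun γ hγ hwγ k => hrest γ hγ ?_ k⟩
  rintro ⟨j, rfl⟩
  have hneg := hsign.neg j l j.2 le_rfl
  rw [LinearMap.comp_apply, LinearEquiv.coe_coe, ← hlen, List.take_length,
    ← KacMoodyData.wordProd_eq_listProd, ← hw] at hneg
  linarith [KacMoodyData.one_le_ht hwγ]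
end
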